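/- arXiv:2003.01683 — 5 statements merged into one kernel-verified Lean document; each statement's English description precedes it below -/
import Mathlib

section
/- Let ε ∈ (0,1) and let G be a graph with vertex partition V(G) = V_1 ∪ ... ∪ V_m such that |V_i| ≥ (1+ε)D and the average degree of V_i in G is at most D for each i. Then there exist D' ≥ D and subsets V_i' ⊆ V_i with |V_i'| ≥ (1+ε/2)D' such that, letting G' be the induced subgraph on the union of the V_i', the average degree of V_i' in G' is at most D' for each i, and the maximum degree of G' is at most 8D'/ε. -/
open Finset

lemma filter_adj_card_le {V : Type*} [Fintype V] [DecidableEq V]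
    (G : SimpleGraph V) [DecidableRel G.Adj] (S : Finset V) (v : V) :
    ((S.filter (fun w => G.Adj v w)).card : ℝ) ≤ (G.degree v : ℝ) := by
  have : (S.filter (fun w => G.Adj v w)).card ≤ G.degree v := by
    rw [← SimpleGraph.card_neighborFinset_eq_degree]
    apply Finset.card_le_card
    intro w hw
    rw [Finset.mem_filter] at hw
    rw [SimpleGraph.mem_neighborFinset]
    exact hw.2
  exact_mod_cast this

/-- Max-degree reduction: one can pass to subsets `V_i' ⊆ V_i` and a slightly larger `D'`
so that parts are still large, average degrees (in the induced subgraph `G'`) are at most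
`D'`, and moreover the maximum degree of `G'` is at most `8D'/ε`. -/
theorem stmt1 {V : Type*} [Fintype V] [DecidableEq V]
    (G : SimpleGraph V) [DecidableRel G.Adj]
    (m : ℕ) (P : Fin m → Finset V) (D ε : ℝ) (hε : ε ∈ Set.Ioo (0 : ℝ) 1)
    (hpart : ∀ v : V, ∃! i, v ∈ P i)
    (hsize : ∀ i, (1 + ε) * D ≤ (P i).card)
    (havg : ∀ i, (∑ v ∈ P i, (G.degree v : ℝ)) ≤ D * (P i).card) :
    ∃ (D' : ℝ) (P' : Fin m → Finset V), D ≤ D' ∧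
      (∀ i, P' i ⊆ P i) ∧
      (∀ i, (1 + ε / 2) * D' ≤ (P' i).card) ∧
      (∀ i, (∑ v ∈ P' i,
          (((Finset.univ.biUnion P').filter (fun w => G.Adj v w)).card : ℝ))
        ≤ D' * (P' i).card) ∧
      (∀ v ∈ Finset.univ.biUnion P',
        ((((Finset.univ.biUnion P').filter (fun w => G.Adj v w)).card : ℝ)) ≤ 8 * D' / ε) := by
  classical
  obtain ⟨hε0, hε1⟩ := hε
  by_cases hD : D ≤ 0
  · -- degenerate case: all degrees are 0
    have hdeg : ∀ v : V, (G.degree v : ℝ) = 0 := by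
      intro v
      obtain ⟨i, hi, -⟩ := hpart v
      by_contra h
      have hv : (0:ℝ) < (G.degree v : ℝ) := lt_of_le_of_ne (by positivity) (Ne.symm h)
      have h1 : (0:ℝ) < ∑ w ∈ P i, (G.degree w : ℝ) :=
        lt_of_lt_of_le hv (Finset.single_le_sum (f := fun w => (G.degree w : ℝ))
          (fun w _ => by positivity) hi)
      have h2 : D * ((P i).card : ℝ) ≤ 0 :=
        mul_nonpos_of_nonpos_of_nonneg hD (by positivity)
      linarith [havg i]
    have hfil : ∀ (S : Finset V) (v : V),
        ((S.filter (fun w => G.Adj v w)).card : ℝ) = 0 := by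
      intro S v
      have := filter_adj_card_le G S v
      have h0 : (0:ℝ) ≤ ((S.filter (fun w => G.Adj v w)).card : ℝ) := by positivity
      linarith [hdeg v]
    refine ⟨0, P, hD, fun i => subset_rfl, ?_, ?_, ?_⟩
    · intro i; simp
    · intro i
      rw [Finset.sum_congr rfl (fun v _ => hfil _ v)]
      simp
    · intro v _
      rw [hfil]
      simp
  · push_neg at hD
    have hc : (0:ℝ) < 1 - ε / 8 := by linarith
    set T : ℝ := 8 * D / ε with hT_def
    have hT : 0 < T := by positivity
    set P' : Fin m → Finset V := fun i => (P i).filter (fun v => (G.degree v : ℝ) ≤ T) with hP'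
    have hsub : ∀ i, P' i ⊆ P i := fun i => Finset.filter_subset _ _
    -- key card bound
    have hcard : ∀ i, (1 - ε / 8) * ((P i).card : ℝ) ≤ ((P' i).card : ℝ) := by
      intro i
      set B : Finset V := (P i).filter (fun v => ¬ ((G.degree v : ℝ) ≤ T)) with hB
      have hsplit : (P' i).card + B.card = (P i).card := by
        simpa [hP', hB] using
          Finset.card_filter_add_card_filter_not
            (s := P i) (p := fun v => (G.degree v : ℝ) ≤ T)
      have hBsum : (B.card : ℝ) * T ≤ ∑ v ∈ B, (G.degree v : ℝ) := by
        have := Finset.card_nsmul_le_sum B (fun v => (G.degree v : ℝ)) T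
          (fun v hv => by
            rw [hB, Finset.mem_filter] at hv
            exact le_of_lt (not_le.mp hv.2))
        simpa [nsmul_eq_mul] using this
      have hBle : ∑ v ∈ B, (G.degree v : ℝ) ≤ ∑ v ∈ P i, (G.degree v : ℝ) :=
        Finset.sum_le_sum_of_subset_of_nonneg (Finset.filter_subset _ _)
          (fun v _ _ => by positivity)
      have hBcard : (B.card : ℝ) ≤ ε * ((P i).card : ℝ) / 8 := by
        have h1 : (B.card : ℝ) * T ≤ D * ((P i).card : ℝ) :=
          le_trans hBsum (le_trans hBle (havg i))
        rw [hT_def] at h1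
        have key : (B.card : ℝ) * (8 * D) ≤ D * ((P i).card : ℝ) * ε := by
          calc (B.card : ℝ) * (8 * D) = (B.card : ℝ) * (8 * D / ε) * ε := by
                field_simp
            _ ≤ D * ((P i).card : ℝ) * ε := mul_le_mul_of_nonneg_right h1 hε0.le
        rw [le_div_iff₀ (by norm_num : (0:ℝ) < 8)]
        nlinarith [key, hD]
      have : ((P' i).card : ℝ) = ((P i).card : ℝ) - (B.card : ℝ) := by
        have := hsplit
        push_cast [← this]
        ring
      rw [this]
      nlinarith
    have hDD' : D ≤ D / (1 - ε / 8) := by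
      have hc1 : (1 - ε / 8 : ℝ) ≤ 1 := by linarith
      rw [le_div_iff₀ hc]
      nlinarith [mul_le_mul_of_nonneg_left hc1 hD.le]
    refine ⟨D / (1 - ε / 8), P', hDD', hsub, ?_, ?_, ?_⟩
    · intro i
      have h1 := hcard i
      have h2 := hsize i
      rw [mul_div_assoc', div_le_iff₀ hc]
      have key : (1 + ε / 2) * D ≤ (1 - ε / 8) * ((1 - ε / 8) * ((P i).card : ℝ)) := by
        have h2' : (1 - ε / 8) * ((1 - ε / 8) * ((1 + ε) * D)) ≤ (1 - ε / 8) * ((1 - ε / 8) * ((P i).card : ℝ)) := by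
          have := mul_le_mul_of_nonneg_left h2 hc.le
          exact mul_le_mul_of_nonneg_left this hc.le
        have hpoly : (1 + ε / 2) * D ≤ (1 - ε / 8) * ((1 - ε / 8) * ((1 + ε) * D)) := by
          nlinarith [mul_pos hD hε0, mul_pos (mul_pos hD hε0) hε0,
            mul_pos (mul_pos (mul_pos hD hε0) hε0) hε0]
        linarith
      nlinarith [mul_le_mul_of_nonneg_left h1 hc.le]
    · intro i
      have hsum : ∑ v ∈ P' i, (((Finset.univ.biUnion P').filter (fun w => G.Adj v w)).card : ℝ)
          ≤ ∑ v ∈ P i, (G.degree v : ℝ) := by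
        refine le_trans (Finset.sum_le_sum (fun v _ => filter_adj_card_le G _ v)) ?_
        exact Finset.sum_le_sum_of_subset_of_nonneg (hsub i) (fun v _ _ => by positivity)
      have h1 : ∑ v ∈ P' i, (((Finset.univ.biUnion P').filter (fun w => G.Adj v w)).card : ℝ)
          ≤ D * ((P i).card : ℝ) := le_trans hsum (havg i)
      rw [div_mul_eq_mul_div, le_div_iff₀ hc]
      nlinarith [hcard i, mul_le_mul_of_nonneg_right h1 hc.le]
    · intro v hv
      rw [Finset.mem_biUnion] at hv
      obtain ⟨i, -, hvi⟩ := hv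
      rw [hP', Finset.mem_filter] at hvi
      refine le_trans (filter_adj_card_le G _ v) (le_trans hvi.2 ?_)
      rw [hT_def]
      gcongr
end

section
/- For every r ≥ 2 there is a constant c_r > 0 such that for all k ≥ 2 and 1 ≤ s ≤ k^r: if n ≤ c_r · (k^r/s)^{1/(r-1)}, then every n-partite r-uniform hypergraph with parts of size k in which any r parts induce exactly s edges forming a matching has an independent transversal. In other words, f(k,r,s) = Ω_r((k^r/s)^{1/(r-1)}). -/
/-!
Choose a transversal `f : Fin n → Fin k` uniformly at random. An edge `e` lies in its graph
with probability `k ^ (-r)`, and since every `r` parts carry at most `s` edges, `e` shares a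
part with at most `r * s * C(n - 1, r - 1) ≤ r * s * n ^ (r - 1)` edges. For
`n ≤ (8 r)^(-1/(r-1)) (k^r / s)^(1/(r-1))` this dependency degree is at most `k ^ r / 8`, and
the symmetric Lovász Local Lemma, run as a count over the `k ^ n` transversals, yields one whose
graph contains no edge.
-/

open Finset

namespace IndepTransversal

variable {ι α : Type*} [DecidableEq ι]

def parts (e : Finset (ι × α)) : Finset ι := e.image Prod.fst

lemma mem_parts {e : Finset (ι × α)} {i : ι} : i ∈ parts e ↔ ∃ a, (i, a) ∈ e := by
  simp [parts]

lemma card_parts {e : Finset (ι × α)} (he : ∀ i, #{v ∈ e | v.1 = i} ≤ 1) : #(parts e) = #e :=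
  card_image_of_injOn fun v hv w hw hvw =>
    card_le_one.1 (he v.1) v (mem_filter.2 ⟨hv, rfl⟩) w (mem_filter.2 ⟨hw, hvw.symm⟩)

section Counting

variable [Fintype ι] {H : Finset (Finset (ι × α))} {r s : ℕ}

lemma card_filter_mem_parts_le (hr : ∀ e ∈ H, #(parts e) = r)
    (hs : ∀ A : Finset ι, #A = r → #{e ∈ H | parts e ⊆ A} ≤ s) (i : ι) :
    #{e ∈ H | i ∈ parts e} ≤ s * (Fintype.card ι - 1).choose (r - 1) := by
  set B := {e ∈ H | i ∈ parts e}
  have hfiber : ∀ A ∈ B.image parts, #{e ∈ B | parts e = A} ≤ s := by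
    intro A hA
    obtain ⟨e, heB, rfl⟩ := mem_image.1 hA
    refine (card_le_card fun x hx => ?_).trans (hs _ (hr e (mem_filter.1 heB).1))
    simp only [B, mem_filter] at hx ⊢
    exact ⟨hx.1.1, hx.2.subset⟩
  have himage : B.image parts ⊆ ((univ.erase i).powersetCard (r - 1)).image (insert i) := by
    intro A hA
    obtain ⟨e, heB, rfl⟩ := mem_image.1 hA
    obtain ⟨heH, hie⟩ := mem_filter.1 heB
    refine mem_image.2 ⟨(parts e).erase i,
      mem_powersetCard.2 ⟨erase_subset_erase _ (subset_univ _), ?_⟩, insert_erase hie⟩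
    rw [card_erase_of_mem hie, hr e heH]
  calc #B ≤ s * #(B.image parts) := card_le_mul_card_image _ _ hfiber
    _ ≤ s * #((univ.erase i).powersetCard (r - 1)) :=
        Nat.mul_le_mul_left _ ((card_le_card himage).trans card_image_le)
    _ = s * (Fintype.card ι - 1).choose (r - 1) := by
        rw [card_powersetCard, card_erase_of_mem (mem_univ i), card_univ]

lemma card_filter_not_disjoint_parts_le [DecidableEq α] (hr : ∀ e ∈ H, #(parts e) = r)
    (hs : ∀ A : Finset ι, #A = r → #{e ∈ H | parts e ⊆ A} ≤ s) {e : Finset (ι × α)}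
    (he : #(parts e) = r) :
    #{e' ∈ H | ¬ Disjoint (parts e') (parts e)} ≤ r * (s * (Fintype.card ι - 1).choose (r - 1)) :=
  calc #{e' ∈ H | ¬ Disjoint (parts e') (parts e)}
      ≤ #((parts e).biUnion fun i => {e' ∈ H | i ∈ parts e'}) := by
        refine card_le_card fun e' he' => ?_
        obtain ⟨he'H, hmeet⟩ := mem_filter.1 he'
        obtain ⟨i, hi', hi⟩ := not_disjoint_iff.1 hmeet
        exact mem_biUnion.2 ⟨i, hi, mem_filter.2 ⟨he'H, hi'⟩⟩
    _ ≤ ∑ i ∈ parts e, #{e' ∈ H | i ∈ parts e'} := card_biUnion_le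
    _ ≤ ∑ _i ∈ parts e, s * (Fintype.card ι - 1).choose (r - 1) :=
        sum_le_sum fun i _ => card_filter_mem_parts_le hr hs i
    _ = r * (s * (Fintype.card ι - 1).choose (r - 1)) := by rw [sum_const, he, smul_eq_mul]

end Counting

variable [Fintype ι] [DecidableEq α]

def graph (f : ι → α) : Finset (ι × α) := univ.image fun i => (i, f i)

lemma subset_graph_iff {e : Finset (ι × α)} {f : ι → α} :
    e ⊆ graph f ↔ ∀ v ∈ e, f v.1 = v.2 := by
  simp only [subset_iff, graph, mem_image, mem_univ, true_and, Prod.ext_iff]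
  exact forall₂_congr fun v _ => ⟨fun ⟨i, hi, hv⟩ => hi ▸ hv, fun h => ⟨v.1, rfl, h⟩⟩

variable [Fintype α]

def independentTransversals (F : Finset (Finset (ι × α))) : Finset (ι → α) :=
  {f | ∀ e ∈ F, ¬ e ⊆ graph f}

local notation "𝒯" => independentTransversals

@[simp]
lemma mem_independentTransversals {F : Finset (Finset (ι × α))} {f : ι → α} :
    f ∈ 𝒯 F ↔ ∀ e ∈ F, ¬ e ⊆ graph f := by
  simp [independentTransversals]

lemma independentTransversals_anti {F G : Finset (Finset (ι × α))} (h : F ⊆ G) :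
    𝒯 G ⊆ 𝒯 F := fun _ hf => by
  simp only [mem_independentTransversals] at hf ⊢
  exact fun e he => hf e (h he)

lemma independentTransversals_insert (e : Finset (ι × α)) (F : Finset (Finset (ι × α))) :
    𝒯 (insert e F) = {f ∈ 𝒯 F | ¬ e ⊆ graph f} := by
  ext f
  simp [and_comm]

lemma card_independentTransversals_le_add_sum {F M N : Finset (Finset (ι × α))} (hF : F ⊆ M ∪ N) :
    #(𝒯 M) ≤ #(𝒯 F) + ∑ a ∈ N, #{f ∈ 𝒯 M | a ⊆ graph f} := by
  calc #(𝒯 M) ≤ #(𝒯 F ∪ N.biUnion fun a => {f ∈ 𝒯 M | a ⊆ graph f}) := by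
        refine card_le_card fun f hf => ?_
        by_cases h : f ∈ 𝒯 F
        · exact mem_union_left _ h
        · simp only [mem_independentTransversals, not_forall, not_not] at h hf
          obtain ⟨a, ha, hfa⟩ := h
          have haN : a ∈ N := ((mem_union.1 (hF ha)).resolve_left fun haM => hf a haM hfa)
          simp only [mem_union, mem_biUnion, mem_filter, mem_independentTransversals]
          exact Or.inr ⟨a, haN, hf, hfa⟩
    _ ≤ _ := (card_union_le _ _).trans (add_le_add_right card_biUnion_le _)

/-- Overwriting a transversal on `parts e` keeps it independent in `M`, so hitting `e` is
independent of avoiding `M`. -/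
lemma pow_mul_card_filter_subset_graph_le {e : Finset (ι × α)} {M : Finset (Finset (ι × α))}
    (hM : ∀ e' ∈ M, Disjoint (parts e') (parts e)) :
    Fintype.card α ^ #(parts e) * #{f ∈ 𝒯 M | e ⊆ graph f} ≤ #(𝒯 M) := by
  let glue : (ι → α) × (parts e → α) → ι → α := fun p i =>
    if h : i ∈ parts e then p.2 ⟨i, h⟩ else p.1 i
  have glue_off : ∀ p i, i ∉ parts e → glue p i = p.1 i := fun p i h => dif_neg h
  rw [mul_comm, ← Fintype.card_coe (parts e), ← Fintype.card_fun, ← card_univ, ← card_product]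
  refine card_le_card_of_injOn glue (fun p hp => ?_) (fun p hp q hq hpq => ?_)
  · simp only [coe_product, Set.mem_prod, mem_coe, mem_filter, mem_independentTransversals] at hp
    simp only [mem_coe, mem_independentTransversals, subset_graph_iff]
    refine fun e' he' hglue => hp.1.1 e' he' (subset_graph_iff.2 fun v hv => ?_)
    have hv' : v.1 ∉ parts e := disjoint_left.1 (hM e' he') (mem_image_of_mem _ hv)
    rw [← glue_off p _ hv', hglue v hv]
  · simp only [coe_product, Set.mem_prod, mem_coe, mem_filter, subset_graph_iff] at hp hq
    refine Prod.ext (funext fun i => ?_) (funext fun i => ?_)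
    · by_cases hi : i ∈ parts e
      · obtain ⟨a, ha⟩ := mem_parts.1 hi
        exact (hp.1.2 _ ha).trans (hq.1.2 _ ha).symm
      · simpa only [glue_off _ _ hi] using congrFun hpq i
    · simpa [glue] using congrFun hpq i

variable {H : Finset (Finset (ι × α))} {D : ℕ}

/-- The counting form of the symmetric local lemma: conditioned on avoiding any `F ⊆ H`, every
edge of `H` is hit with probability at most `1 / (2 D)`. -/
lemma two_mul_card_filter_subset_graph_le (hD : 0 < D)
    (hdeg : ∀ e ∈ H, #{e' ∈ H | ¬ Disjoint (parts e') (parts e)} ≤ D)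
    (hprob : ∀ e ∈ H, 4 * D ≤ Fintype.card α ^ #(parts e)) (F : Finset (Finset (ι × α)))
    (hF : F ⊆ H) {e : Finset (ι × α)} (he : e ∈ H) :
    2 * D * #{f ∈ 𝒯 F | e ⊆ graph f} ≤ #(𝒯 F) := by
  induction F using Finset.strongInduction generalizing e with
  | H F ih =>
  set M := {e' ∈ F | Disjoint (parts e') (parts e)}
  set N := {e' ∈ F | ¬ Disjoint (parts e') (parts e)}
  have hTF : 𝒯 F ⊆ 𝒯 M := independentTransversals_anti (filter_subset _ _)
  have hN : #N ≤ D := (card_le_card (filter_subset_filter _ hF)).trans (hdeg e he)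
  have hM_hit : ∀ a ∈ N, 2 * D * #{f ∈ 𝒯 M | a ⊆ graph f} ≤ #(𝒯 M) := by
    intro a ha
    obtain ⟨haF, ha_meets⟩ := mem_filter.1 ha
    have hMF : M ⊂ F := filter_ssubset.2 ⟨a, haF, ha_meets⟩
    exact ih M hMF ((filter_subset _ _).trans hF) (hF haF)
  -- Removing the edges meeting `e` costs at most half of the transversals.
  have hM_le : #(𝒯 M) ≤ 2 * #(𝒯 F) := by
    have hsplit : F ⊆ M ∪ N := (filter_union_filter_not_eq _ F).ge
    have := card_independentTransversals_le_add_sum hsplit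
    have hsum : 2 * D * ∑ a ∈ N, #{f ∈ 𝒯 M | a ⊆ graph f} ≤ D * #(𝒯 M) :=
      calc 2 * D * ∑ a ∈ N, #{f ∈ 𝒯 M | a ⊆ graph f}
          ≤ ∑ a ∈ N, #(𝒯 M) := by rw [mul_sum]; exact sum_le_sum hM_hit
        _ = #N * #(𝒯 M) := by rw [sum_const, smul_eq_mul]
        _ ≤ D * #(𝒯 M) := Nat.mul_le_mul_right _ hN
    refine Nat.le_of_mul_le_mul_left ?_ hD
    nlinarith
  have hindep := pow_mul_card_filter_subset_graph_le (e := e) (M := M) fun e' he' =>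
    (mem_filter.1 he').2
  have hmono : #{f ∈ 𝒯 F | e ⊆ graph f} ≤ #{f ∈ 𝒯 M | e ⊆ graph f} :=
    card_le_card (filter_subset_filter _ hTF)
  have : 2 * (2 * D * #{f ∈ 𝒯 F | e ⊆ graph f}) ≤ 2 * #(𝒯 F) :=
    calc 2 * (2 * D * #{f ∈ 𝒯 F | e ⊆ graph f}) = 4 * D * #{f ∈ 𝒯 F | e ⊆ graph f} := by ring
      _ ≤ Fintype.card α ^ #(parts e) * #{f ∈ 𝒯 M | e ⊆ graph f} :=
          Nat.mul_le_mul (hprob e he) hmono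
      _ ≤ #(𝒯 M) := hindep
      _ ≤ 2 * #(𝒯 F) := hM_le
  omega

theorem independentTransversals_nonempty [Nonempty α] (hD : 0 < D)
    (hdeg : ∀ e ∈ H, #{e' ∈ H | ¬ Disjoint (parts e') (parts e)} ≤ D)
    (hprob : ∀ e ∈ H, 4 * D ≤ Fintype.card α ^ #(parts e)) :
    (𝒯 H).Nonempty := by
  suffices ∀ G ⊆ H, (𝒯 G).Nonempty from this H Subset.rfl
  intro G
  induction G using Finset.induction_on with
  | empty => intro _; simp [independentTransversals]
  | insert a G _ ih =>
    intro hG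
    have hGH := (subset_insert a G).trans hG
    have hhit := two_mul_card_filter_subset_graph_le hD hdeg hprob G hGH (hG (mem_insert_self a G))
    have hpos := (ih hGH).card_pos
    rw [independentTransversals_insert, ← card_pos]
    have := card_filter_add_card_filter_not (s := 𝒯 G) (fun f => a ⊆ graph f)
    nlinarith

end IndepTransversal

lemma mul_pow_le_of_le_rpow {r k s n : ℕ} (hr : 2 ≤ r) (hs : 1 ≤ s)
    (hn : (n : ℝ) ≤ ((8 : ℝ) * r)⁻¹ ^ ((1 : ℝ) / ((r : ℝ) - 1)) *
      (((k : ℝ) ^ r) / s) ^ ((1 : ℝ) / ((r : ℝ) - 1))) :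
    8 * (r * s * n ^ (r - 1)) ≤ k ^ r := by
  have hm : ((r - 1 : ℕ) : ℝ) = r - 1 := by rw [Nat.cast_sub (by omega), Nat.cast_one]
  have hs' : (0 : ℝ) < s := by exact_mod_cast hs
  have hr' : (0 : ℝ) < r := by exact_mod_cast (by omega : 0 < r)
  rw [← Real.mul_rpow (by positivity) (by positivity), one_div, ← hm,
    Real.le_rpow_inv_iff_of_pos (by positivity) (by positivity)
      (by exact_mod_cast (by omega : 0 < r - 1)), Real.rpow_natCast] at hn
  have : (8 * (r * s * n ^ (r - 1)) : ℝ) ≤ k ^ r := by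
    calc (8 * (r * s * n ^ (r - 1)) : ℝ) = 8 * r * s * n ^ (r - 1) := by ring
      _ ≤ 8 * r * s * (((8 : ℝ) * r)⁻¹ * (k ^ r / s)) := by gcongr
      _ = k ^ r := by field_simp
  exact_mod_cast this

open IndepTransversal in
/-- `f(k,r,s) = Ω_r((k^r/s)^{1/(r-1)})`: for every `r ≥ 2` there is `c_r > 0` such that if
`n ≤ c_r·(k^r/s)^{1/(r-1)}`, then every `n`-partite `r`-uniform hypergraph with parts of
size `k` (taken as the columns of `Fin n × Fin k`) in which any `r` parts induce exactly
`s` edges forming a matching has an independent transversal. -/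
theorem stmt8 : ∀ r : ℕ, 2 ≤ r → ∃ c : ℝ, 0 < c ∧
    ∀ k s n : ℕ, 2 ≤ k → 1 ≤ s → s ≤ k ^ r →
    (n : ℝ) ≤ c * (((k : ℝ) ^ r) / s) ^ ((1 : ℝ) / ((r : ℝ) - 1)) →
    ∀ H : Finset (Finset (Fin n × Fin k)),
      (∀ e ∈ H, e.card = r) →
      (∀ e ∈ H, ∀ i : Fin n, (e.filter (fun v => v.1 = i)).card ≤ 1) →
      (∀ A : Finset (Fin n), A.card = r →
        (H.filter (fun e => ∀ v ∈ e, v.1 ∈ A)).card = s ∧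
        ∀ e ∈ H, ∀ e' ∈ H, (∀ v ∈ e, v.1 ∈ A) → (∀ v ∈ e', v.1 ∈ A) →
          e ≠ e' → Disjoint e e') →
      ∃ f : Fin n → Fin k, ∀ e ∈ H, ¬ e ⊆ Finset.univ.image (fun i => (i, f i)) := by
  intro r hr
  refine ⟨((8 : ℝ) * r)⁻¹ ^ ((1 : ℝ) / ((r : ℝ) - 1)), Real.rpow_pos_of_pos (by positivity) _, ?_⟩
  intro k s n hk hs _ hn H hcard hpart hinduced
  have hr_parts : ∀ e ∈ H, #(parts e) = r := fun e he =>
    (card_parts (hpart e he)).trans (hcard e he)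
  have hs_parts : ∀ A : Finset (Fin n), #A = r → #{e ∈ H | parts e ⊆ A} ≤ s := fun A hA => by
    simpa only [parts, image_subset_iff] using (hinduced A hA).1.le
  set D := r * s * n ^ (r - 1)
  have hdeg : ∀ e ∈ H, #{e' ∈ H | ¬ Disjoint (parts e') (parts e)} ≤ D + 1 := by
    intro e he
    have hC : (n - 1).choose (r - 1) ≤ n ^ (r - 1) :=
      (Nat.choose_le_pow _ _).trans (Nat.pow_le_pow_left (Nat.sub_le _ _) _)
    calc #{e' ∈ H | ¬ Disjoint (parts e') (parts e)} ≤ r * (s * (n - 1).choose (r - 1)) := by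
          simpa only [Fintype.card_fin] using
            card_filter_not_disjoint_parts_le hr_parts hs_parts (hr_parts e he)
      _ ≤ D + 1 := by rw [← mul_assoc]; exact (Nat.mul_le_mul_left _ hC).trans (Nat.le_succ _)
  have hprob : 4 * (D + 1) ≤ k ^ r := by
    have h8 := mul_pow_le_of_le_rpow hr hs hn
    have h4 : 2 ^ 2 ≤ k ^ r := (Nat.pow_le_pow_right two_pos hr).trans (Nat.pow_le_pow_left hk r)
    rcases Nat.eq_zero_or_pos D with hD | hD <;> omega
  have : Nonempty (Fin k) := ⟨⟨0, by omega⟩⟩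
  obtain ⟨f, hf⟩ := independentTransversals_nonempty (Nat.succ_pos D) hdeg fun e he => by
    rwa [hr_parts e he, Fintype.card_fin]
  exact ⟨f, mem_independentTransversals.1 hf⟩
end

section
/- Choose an (n,k,r,s)-graph uniformly at random (i.e., for each r-set of parts, choose uniformly at random a perfect-matching-like set of s disjoint edges among them). The expected number of independent transversals equals k^n·(1 - s/k^r)^{C(n,r)}. Consequently, if k^n·(1 - s/k^r)^{C(n,r)} < 1, then there exists an (n,k,r,s)-graph with no independent transversal, so f(k,r,s) < n. -/
/-!
Count the pairs `(H, f)` of a graph and an independent transversal. A graph is the same as an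
independent choice, for every `r`-set `A` of parts, of a matching of `s` edges on `A`, so the
graphs in which `f` is independent form a product, over `A`, of the matchings on `A` that `f`
avoids. A fixed matching on `A` is hit by exactly `s·k^(n-r)` of the `k^n` transversals, since
two distinct edges on the same `A` never lie in one transversal; and swapping colours part by
part shows that all transversals avoid equally many matchings on `A`. Hence a fraction
`1 - s/k^r` of the matchings on `A` avoid `f`, and multiplying over the `C(n,r)` sets `A` gives
the expectation. If it is below `1`, some graph has no independent transversal.
-/

open Finset

theorem card_filter_fiberwise_mem_eq_prod {E κ : Type*} [Fintype E] [DecidableEq E]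
    [DecidableEq κ] (supp : E → κ) (I : Finset κ) (S : κ → Finset (Finset E))
    (hS : ∀ a ∈ I, ∀ m ∈ S a, ∀ e ∈ m, supp e = a) (P : Finset E → Prop) [DecidablePred P]
    (hP : ∀ H, P H ↔ (∀ e ∈ H, supp e ∈ I) ∧ ∀ a ∈ I, H.filter (supp · = a) ∈ S a) :
    #{H | P H} = ∏ a ∈ I, #(S a) := by
  simp_rw [hP]
  rw [← card_pi]
  have fiber_biUnion : ∀ p ∈ I.pi S, ∀ a (ha : a ∈ I),
      (I.attach.biUnion fun b => p b.1 b.2).filter (supp · = a) = p a ha := by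
    intro p hp a ha
    ext e
    simp only [mem_filter, mem_biUnion, mem_attach, true_and, Subtype.exists]
    constructor
    · rintro ⟨⟨b, hb, he⟩, rfl⟩
      obtain rfl := hS b hb _ (mem_pi.1 hp b hb) e he
      exact he
    · exact fun he => ⟨⟨a, ha, he⟩, hS a ha _ (mem_pi.1 hp a ha) e he⟩
  refine card_nbij' (fun H a _ => H.filter (supp · = a))
    (fun p => I.attach.biUnion fun b => p b.1 b.2) ?_ ?_ ?_ ?_
  · intro H hH
    simp only [coe_filter, mem_univ, true_and, Set.mem_ofPred_eq] at hH
    exact mem_coe.2 (mem_pi.2 hH.2)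
  · intro p hp
    simp only [coe_filter, mem_univ, true_and, Set.mem_ofPred_eq]
    refine ⟨fun e he => ?_, fun a ha => by rw [fiber_biUnion p hp a ha]; exact mem_pi.1 hp a ha⟩
    obtain ⟨⟨b, hb⟩, -, he⟩ := mem_biUnion.1 he
    rwa [hS b hb _ (mem_pi.1 hp b hb) e he]
  · intro H hH
    ext e
    simp only [mem_biUnion, mem_attach, true_and, Subtype.exists, mem_filter]
    exact ⟨fun ⟨_, _, he, _⟩ => he, fun he => ⟨supp e, (mem_filter.1 hH).2.1 e he, he, rfl⟩⟩
  · intro p hp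
    funext a ha
    exact fiber_biUnion p hp a ha

namespace IndepTransversal

section Edges

variable {ι β : Type*} [DecidableEq ι]

def IsEdgeOn (A : Finset ι) (e : Finset (ι × β)) : Prop :=
  Set.InjOn Prod.fst (e : Set (ι × β)) ∧ e.image Prod.fst = A

def IsMatchingOn (s : ℕ) (A : Finset ι) (m : Finset (Finset (ι × β))) : Prop :=
  (∀ e ∈ m, IsEdgeOn A e) ∧ #m = s ∧ ∀ e ∈ m, ∀ e' ∈ m, e ≠ e' → Disjoint e e'

def IsNKRSGraph (r s : ℕ) (H : Finset (Finset (ι × β))) : Prop :=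
  (∀ e ∈ H, #e = r) ∧
  (∀ e ∈ H, ∀ i : ι, #(e.filter fun v => v.1 = i) ≤ 1) ∧
  ∀ A : Finset ι, #A = r →
    #(H.filter fun e => ∀ v ∈ e, v.1 ∈ A) = s ∧
    ∀ e ∈ H, ∀ e' ∈ H, (∀ v ∈ e, v.1 ∈ A) → (∀ v ∈ e', v.1 ∈ A) → e ≠ e' → Disjoint e e'

lemma injOn_fst_iff {e : Finset (ι × β)} :
    Set.InjOn Prod.fst (e : Set (ι × β)) ↔ ∀ i, #(e.filter fun v => v.1 = i) ≤ 1 := by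
  refine ⟨fun h i => card_le_one.2 fun v hv w hw => ?_, fun h v hv w hw hvw => ?_⟩
  · rw [mem_filter] at hv hw
    exact h hv.1 hw.1 (hv.2.trans hw.2.symm)
  · exact card_le_one.1 (h v.1) v (mem_filter.2 ⟨hv, rfl⟩) w (mem_filter.2 ⟨hw, hvw.symm⟩)

lemma forall_fst_mem_iff_image_fst_eq {e : Finset (ι × β)} {A : Finset ι}
    (he : Set.InjOn Prod.fst (e : Set (ι × β))) (hcard : #e = #A) :
    (∀ v ∈ e, v.1 ∈ A) ↔ e.image Prod.fst = A := by
  refine ⟨fun h => eq_of_subset_of_card_le ?_ ?_, fun h v hv => h ▸ mem_image_of_mem _ hv⟩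
  · intro i hi
    obtain ⟨v, hv, rfl⟩ := mem_image.1 hi
    exact h v hv
  · rw [card_image_of_injOn he, hcard]

lemma IsMatchingOn.image [DecidableEq β] {s : ℕ} {A : Finset ι} {m : Finset (Finset (ι × β))}
    {π : ι × β → ι × β} (hπ : Function.Injective π) (hπfst : ∀ v, (π v).1 = v.1)
    (hm : IsMatchingOn s A m) : IsMatchingOn s A (m.image (·.image π)) := by
  refine ⟨?_, ?_, ?_⟩
  · simp only [mem_image, forall_exists_index, and_imp]
    rintro _ e he rfl
    refine ⟨fun x hx y hy hxy => ?_, ?_⟩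
    · obtain ⟨v, hv, rfl⟩ := mem_image.1 (mem_coe.1 hx)
      obtain ⟨w, hw, rfl⟩ := mem_image.1 (mem_coe.1 hy)
      exact congrArg π ((hm.1 e he).1 hv hw (by simpa [hπfst] using hxy))
    · rw [image_image, ← (hm.1 e he).2]
      exact image_congr fun v _ => hπfst v
  · rw [card_image_of_injective _ (image_injective hπ), hm.2.1]
  · simp only [mem_image, forall_exists_index, and_imp]
    rintro _ e he rfl _ e' he' rfl hne
    exact (disjoint_image hπ).2 (hm.2.2 e he e' he' fun h => hne (h ▸ rfl))

lemma exists_isMatchingOn [Fintype β] [DecidableEq β] {s : ℕ} {A : Finset ι}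
    (hA : A.Nonempty) (hs : s ≤ Fintype.card β) :
    ∃ m : Finset (Finset (ι × β)), IsMatchingOn s A m := by
  obtain ⟨C, -, hC⟩ := exists_subset_card_eq (s := (univ : Finset β)) (n := s) (by rwa [card_univ])
  have hinj : Function.Injective fun c : β => A.image fun i => (i, c) := by
    intro c d hcd
    obtain ⟨i, hi⟩ := hA
    have hmem : (i, c) ∈ A.image fun j => (j, d) := by
      rw [← show (A.image fun j => (j, c)) = A.image fun j => (j, d) from hcd]
      exact mem_image_of_mem _ hi
    obtain ⟨j, -, hj⟩ := mem_image.1 hmem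
    exact (Prod.ext_iff.1 hj).2.symm
  refine ⟨C.image fun c => A.image fun i => (i, c), ?_,
    by rw [card_image_of_injective _ hinj, hC], ?_⟩
  · simp only [mem_image, forall_exists_index, and_imp]
    rintro _ c - rfl
    refine ⟨fun x hx y hy hxy => ?_, by rw [image_image]; exact image_id'⟩
    obtain ⟨i, -, rfl⟩ := mem_image.1 (mem_coe.1 hx)
    obtain ⟨j, -, rfl⟩ := mem_image.1 (mem_coe.1 hy)
    simp_all
  · simp only [mem_image, forall_exists_index, and_imp]
    rintro _ c - rfl _ d - rfl hne
    refine disjoint_left.2 fun v hv hv' => hne ?_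
    obtain ⟨i, -, rfl⟩ := mem_image.1 hv
    obtain ⟨j, -, hj⟩ := mem_image.1 hv'
    rw [show d = c from (Prod.ext_iff.1 hj).2]

end Edges

section ColSwap

variable {ι β : Type*} [DecidableEq β]

def colSwap (f g : ι → β) (v : ι × β) : ι × β := (v.1, Equiv.swap (f v.1) (g v.1) v.2)

lemma colSwap_injective (f g : ι → β) : Function.Injective (colSwap f g) :=
  Function.LeftInverse.injective (g := colSwap f g) fun v => by simp [colSwap]

end ColSwap

section Transversals

variable {ι β : Type*} [Fintype ι] [DecidableEq ι] [DecidableEq β]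

def graphOf (f : ι → β) : Finset (ι × β) := univ.image fun i => (i, f i)

lemma mem_graphOf {f : ι → β} {v : ι × β} : v ∈ graphOf f ↔ f v.1 = v.2 := by
  simp [graphOf, Prod.ext_iff, eq_comm]

def Hits (f : ι → β) (H : Finset (Finset (ι × β))) : Prop := ∃ e ∈ H, e ⊆ graphOf f

instance (f : ι → β) : DecidablePred (Hits f) :=
  fun _ => inferInstanceAs (Decidable (∃ e ∈ _, _))

lemma colSwap_mem_graphOf {f g : ι → β} {v : ι × β} (hv : v ∈ graphOf f) :
    colSwap f g v ∈ graphOf g := by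
  rw [mem_graphOf] at hv ⊢
  simp [colSwap, ← hv]

lemma hits_iff_exists_hits_filter_image_fst_eq {f : ι → β} {H : Finset (Finset (ι × β))}
    {I : Finset (Finset ι)} (hH : ∀ e ∈ H, e.image Prod.fst ∈ I) :
    Hits f H ↔ ∃ A ∈ I, Hits f (H.filter (·.image Prod.fst = A)) := by
  constructor
  · rintro ⟨e, he, hef⟩
    exact ⟨_, hH e he, e, mem_filter.2 ⟨he, rfl⟩, hef⟩
  · rintro ⟨A, -, e, he, hef⟩
    exact ⟨e, (mem_filter.1 he).1, hef⟩

lemma IsEdgeOn.eq_image_of_subset_graphOf {A : Finset ι} {e : Finset (ι × β)} {f : ι → β}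
    (he : IsEdgeOn A e) (hf : e ⊆ graphOf f) : e = A.image fun i => (i, f i) := by
  ext v
  constructor
  · intro hv
    refine mem_image.2 ⟨v.1, he.2 ▸ mem_image_of_mem _ hv, ?_⟩
    rw [mem_graphOf.1 (hf hv)]
  · intro hv
    obtain ⟨i, hi, rfl⟩ := mem_image.1 hv
    obtain ⟨w, hw, rfl⟩ := mem_image.1 (he.2.symm ▸ hi)
    rwa [mem_graphOf.1 (hf hw)]

lemma IsEdgeOn.subset_graphOf_iff {A : Finset ι} {e : Finset (ι × β)} {f : ι → β}
    (he : IsEdgeOn A e) : e ⊆ graphOf f ↔ ∀ i ∈ A, (i, f i) ∈ e := by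
  constructor
  · intro hf i hi
    rw [he.eq_image_of_subset_graphOf hf]
    exact mem_image_of_mem _ hi
  · intro hf v hv
    have hvf : (v.1, f v.1) ∈ e := hf v.1 (he.2 ▸ mem_image_of_mem _ hv)
    rw [he.1 hv hvf rfl]
    exact mem_graphOf.2 rfl

variable [Fintype β]

lemma IsEdgeOn.card_filter_subset_graphOf {A : Finset ι} {e : Finset (ι × β)}
    (he : IsEdgeOn A e) :
    #{f : ι → β | e ⊆ graphOf f} = Fintype.card β ^ (Fintype.card ι - #A) := by
  let D : ι → Finset β := fun i => if i ∈ A then ({c | (i, c) ∈ e} : Finset β) else univ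
  have hD : ({f : ι → β | e ⊆ graphOf f} : Finset (ι → β)) = Fintype.piFinset D := by
    ext f
    simp only [mem_filter, mem_univ, true_and, Fintype.mem_piFinset, he.subset_graphOf_iff, D]
    refine forall_congr' fun i => ?_
    split_ifs with hi <;> simp [hi]
  have hDcard : ∀ i, #(D i) = if i ∈ A then 1 else Fintype.card β := by
    intro i
    split_ifs with hi
    · obtain ⟨w, hw, rfl⟩ := mem_image.1 (he.2.symm ▸ hi)
      refine card_eq_one.2 ⟨w.2, eq_singleton_iff_unique_mem.2 ⟨by simpa [D, hi], ?_⟩⟩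
      intro c hc
      simp only [D, hi, if_true, mem_filter, mem_univ, true_and] at hc
      exact congrArg Prod.snd (he.1 hc hw rfl)
    · simp [D, hi]
  rw [hD, Fintype.card_piFinset]
  simp only [hDcard]
  rw [prod_ite, prod_const_one, one_mul, prod_const, filter_not, filter_mem_eq_inter,
    univ_inter, ← compl_eq_univ_sdiff, card_compl]

lemma IsMatchingOn.card_filter_hits {s : ℕ} {A : Finset ι} {m : Finset (Finset (ι × β))}
    (hm : IsMatchingOn s A m) :
    #{f : ι → β | Hits f m} = s * Fintype.card β ^ (Fintype.card ι - #A) := by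
  have hbiUnion : ({f : ι → β | Hits f m} : Finset (ι → β))
      = m.biUnion fun e => {f | e ⊆ graphOf f} := by
    ext f
    simp only [mem_filter, mem_univ, true_and, mem_biUnion]
    rfl
  rw [hbiUnion, card_biUnion, sum_congr rfl fun e he => (hm.1 e he).card_filter_subset_graphOf,
    sum_const, hm.2.1, smul_eq_mul]
  intro e he e' he' hne
  refine disjoint_left.2 fun f hf hf' => hne ?_
  rw [(hm.1 e he).eq_image_of_subset_graphOf (mem_filter.1 hf).2,
    (hm.1 e' he').eq_image_of_subset_graphOf (mem_filter.1 hf').2]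

end Transversals

section Counting

variable {ι β : Type*} [Fintype ι] [DecidableEq ι] [Fintype β]

variable (β) in
open Classical in
noncomputable def matchingsOn (s : ℕ) (A : Finset ι) : Finset (Finset (Finset (ι × β))) :=
  {m | IsMatchingOn s A m}

variable (ι β) in
open Classical in
noncomputable def nkrsGraphs (r s : ℕ) : Finset (Finset (Finset (ι × β))) :=
  {H | IsNKRSGraph r s H}

lemma mem_matchingsOn {s : ℕ} {A : Finset ι} {m : Finset (Finset (ι × β))} :
    m ∈ matchingsOn β s A ↔ IsMatchingOn s A m := by
  simp [matchingsOn]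

lemma image_fst_eq_of_mem_matchingsOn {s : ℕ} {A : Finset ι} {m : Finset (Finset (ι × β))}
    (hm : m ∈ matchingsOn β s A) {e : Finset (ι × β)} (he : e ∈ m) : e.image Prod.fst = A :=
  ((mem_matchingsOn.1 hm).1 e he).2

lemma isNKRSGraph_iff {r s : ℕ} {H : Finset (Finset (ι × β))} :
    IsNKRSGraph r s H ↔ (∀ e ∈ H, e.image Prod.fst ∈ powersetCard r univ) ∧
      ∀ A ∈ powersetCard r univ, H.filter (·.image Prod.fst = A) ∈ matchingsOn β s A := by
  have within_iff (hH : ∀ e ∈ H, Set.InjOn Prod.fst (e : Set (ι × β)) ∧ #e = r)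
      {A : Finset ι} (hA : #A = r) {e} (he : e ∈ H) :
      (∀ v ∈ e, v.1 ∈ A) ↔ e.image Prod.fst = A :=
    forall_fst_mem_iff_image_fst_eq (hH e he).1 ((hH e he).2.trans hA.symm)
  simp only [mem_powersetCard, subset_univ, true_and, mem_matchingsOn]
  constructor
  · rintro ⟨hcard, hcross, hA⟩
    have hH e (he : e ∈ H) : Set.InjOn Prod.fst (e : Set (ι × β)) ∧ #e = r :=
      ⟨injOn_fst_iff.2 (hcross e he), hcard e he⟩
    refine ⟨fun e he => (card_image_of_injOn (hH e he).1).trans (hcard e he), fun A hAr => ?_⟩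
    have hfilter : H.filter (fun e => ∀ v ∈ e, v.1 ∈ A) = H.filter (·.image Prod.fst = A) :=
      filter_congr fun e he => within_iff hH hAr he
    obtain ⟨hs, hdisj⟩ := hA A hAr
    refine ⟨fun e he => ?_, hfilter ▸ hs, fun e he e' he' => ?_⟩
    · rw [mem_filter] at he
      exact ⟨(hH e he.1).1, he.2⟩
    · rw [mem_filter] at he he'
      exact hdisj e he.1 e' he'.1 ((within_iff hH hAr he.1).2 he.2)
        ((within_iff hH hAr he'.1).2 he'.2)
  · rintro ⟨hsupp, hfib⟩
    have hH e (he : e ∈ H) : Set.InjOn Prod.fst (e : Set (ι × β)) ∧ #e = r := by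
      have hinj := ((hfib _ (hsupp e he)).1 e (mem_filter.2 ⟨he, rfl⟩)).1
      exact ⟨hinj, (card_image_of_injOn hinj).symm.trans (hsupp e he)⟩
    refine ⟨fun e he => (hH e he).2, fun e he => injOn_fst_iff.1 (hH e he).1, fun A hAr => ?_⟩
    have hfilter : H.filter (fun e => ∀ v ∈ e, v.1 ∈ A) = H.filter (·.image Prod.fst = A) :=
      filter_congr fun e he => within_iff hH hAr he
    obtain ⟨-, hs, hdisj⟩ := hfib A hAr
    refine ⟨hfilter ▸ hs, fun e he e' he' heA he'A => ?_⟩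
    exact hdisj e (mem_filter.2 ⟨he, (within_iff hH hAr he).1 heA⟩)
      e' (mem_filter.2 ⟨he', (within_iff hH hAr he').1 he'A⟩)

variable [DecidableEq β]

lemma card_filter_hits_le (s : ℕ) (A : Finset ι) (f g : ι → β) :
    #{m ∈ matchingsOn β s A | Hits f m} ≤ #{m ∈ matchingsOn β s A | Hits g m} := by
  refine card_le_card_of_injOn (·.image (·.image (colSwap f g))) ?_
    (image_injective (image_injective (colSwap_injective f g))).injOn
  intro m hm
  simp only [coe_filter, mem_matchingsOn, Set.mem_ofPred_eq] at hm ⊢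
  obtain ⟨hmatch, e, he, hef⟩ := hm
  refine ⟨hmatch.image (colSwap_injective f g) fun _ => rfl, e.image (colSwap f g),
    mem_image_of_mem _ he, fun x hx => ?_⟩
  obtain ⟨v, hv, rfl⟩ := mem_image.1 hx
  exact colSwap_mem_graphOf (hef hv)

lemma card_filter_hits_mul_pow [Nonempty β] (s : ℕ) (A : Finset ι) (f : ι → β) :
    #{m ∈ matchingsOn β s A | Hits f m} * Fintype.card β ^ #A = #(matchingsOn β s A) * s := by
  have hdouble : ∑ g : ι → β, #{m ∈ matchingsOn β s A | Hits g m}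
      = ∑ m ∈ matchingsOn β s A, #{g : ι → β | Hits g m} :=
    sum_card_bipartiteAbove_eq_sum_card_bipartiteBelow fun g m => Hits g m
  rw [sum_congr rfl fun g _ => le_antisymm (card_filter_hits_le s A g f)
      (card_filter_hits_le s A f g),
    sum_congr rfl fun m hm => (mem_matchingsOn.1 hm).card_filter_hits, sum_const, sum_const,
    card_univ, Fintype.card_fun, smul_eq_mul, smul_eq_mul,
    ← Nat.sub_add_cancel (card_le_univ A), pow_add, Nat.add_sub_cancel] at hdouble
  have hpos : 0 < Fintype.card β ^ (Fintype.card ι - #A) := pow_pos Fintype.card_pos _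
  exact Nat.eq_of_mul_eq_mul_left hpos (by linarith [hdouble])

lemma card_filter_not_hits [Nonempty β] (s : ℕ) (A : Finset ι) (f : ι → β) :
    (#{m ∈ matchingsOn β s A | ¬Hits f m} : ℝ)
      = #(matchingsOn β s A) * (1 - s / (Fintype.card β : ℝ) ^ #A) := by
  have hsplit : (#{m ∈ matchingsOn β s A | Hits f m} : ℝ) + #{m ∈ matchingsOn β s A | ¬Hits f m}
      = #(matchingsOn β s A) := by
    exact_mod_cast card_filter_add_card_filter_not (Hits f)
  have hmul : (#{m ∈ matchingsOn β s A | Hits f m} : ℝ) * (Fintype.card β : ℝ) ^ #A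
      = #(matchingsOn β s A) * s := by
    exact_mod_cast card_filter_hits_mul_pow s A f
  have hpow : (Fintype.card β : ℝ) ^ #A ≠ 0 :=
    pow_ne_zero _ (Nat.cast_ne_zero.2 Fintype.card_ne_zero)
  field_simp
  linear_combination (Fintype.card β : ℝ) ^ #A * hsplit - hmul

lemma card_nkrsGraphs_eq_prod (r s : ℕ) :
    #(nkrsGraphs ι β r s) = ∏ A ∈ powersetCard r (univ : Finset ι), #(matchingsOn β s A) := by
  classical
  exact card_filter_fiberwise_mem_eq_prod (fun e => e.image Prod.fst) _ _
    (fun _ _ _ hm _ he => image_fst_eq_of_mem_matchingsOn hm he) _ fun _ => isNKRSGraph_iff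

lemma card_filter_not_hits_nkrsGraphs_eq_prod (r s : ℕ) (f : ι → β) :
    #{H ∈ nkrsGraphs ι β r s | ¬Hits f H}
      = ∏ A ∈ powersetCard r univ, #{m ∈ matchingsOn β s A | ¬Hits f m} := by
  classical
  rw [nkrsGraphs, filter_filter]
  refine card_filter_fiberwise_mem_eq_prod (fun e => e.image Prod.fst) _ _
    (fun _ _ _ hm _ he => image_fst_eq_of_mem_matchingsOn (mem_filter.1 hm).1 he) _ fun H => ?_
  rw [isNKRSGraph_iff]
  constructor
  · rintro ⟨⟨hsupp, hfib⟩, hnot⟩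
    exact ⟨hsupp, fun A hA => mem_filter.2 ⟨hfib A hA,
      fun h => hnot ((hits_iff_exists_hits_filter_image_fst_eq hsupp).2 ⟨A, hA, h⟩)⟩⟩
  · rintro ⟨hsupp, hfib⟩
    refine ⟨⟨hsupp, fun A hA => (mem_filter.1 (hfib A hA)).1⟩, fun h => ?_⟩
    obtain ⟨A, hA, hAf⟩ := (hits_iff_exists_hits_filter_image_fst_eq hsupp).1 h
    exact (mem_filter.1 (hfib A hA)).2 hAf

lemma card_filter_not_hits_nkrsGraphs [Nonempty β] (r s : ℕ) (f : ι → β) :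
    (#{H ∈ nkrsGraphs ι β r s | ¬Hits f H} : ℝ)
      = #(nkrsGraphs ι β r s) * (1 - s / (Fintype.card β : ℝ) ^ r) ^ (Fintype.card ι).choose r := by
  rw [card_filter_not_hits_nkrsGraphs_eq_prod, card_nkrsGraphs_eq_prod, Nat.cast_prod,
    Nat.cast_prod, ← card_univ (α := ι), ← card_powersetCard, ← prod_const, ← prod_mul_distrib]
  exact prod_congr rfl fun A hA => (mem_powersetCard.1 hA).2 ▸ card_filter_not_hits s A f

lemma sum_card_filter_not_hits_nkrsGraphs [Nonempty β] (r s : ℕ) :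
    ∑ H ∈ nkrsGraphs ι β r s, (#{f : ι → β | ¬Hits f H} : ℝ)
      = #(nkrsGraphs ι β r s) * (Fintype.card β : ℝ) ^ Fintype.card ι
          * (1 - s / (Fintype.card β : ℝ) ^ r) ^ (Fintype.card ι).choose r := by
  have hdouble : ∑ H ∈ nkrsGraphs ι β r s, #{f : ι → β | ¬Hits f H}
      = ∑ f : ι → β, #{H ∈ nkrsGraphs ι β r s | ¬Hits f H} :=
    sum_card_bipartiteAbove_eq_sum_card_bipartiteBelow fun H f => ¬Hits f H
  rw [← Nat.cast_sum, hdouble, Nat.cast_sum, sum_congr rfl fun f _ =>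
    card_filter_not_hits_nkrsGraphs r s f, sum_const, card_univ, Fintype.card_fun,
    nsmul_eq_mul, Nat.cast_pow]
  ring

lemma nkrsGraphs_nonempty {r s : ℕ} (hr : 1 ≤ r) (hs : s ≤ Fintype.card β) :
    (nkrsGraphs ι β r s).Nonempty := by
  rw [← card_pos, card_nkrsGraphs_eq_prod]
  refine prod_pos fun A hA => card_pos.2 ?_
  have hAne : A.Nonempty := card_pos.1 ((mem_powersetCard.1 hA).2 ▸ hr)
  obtain ⟨m, hm⟩ := exists_isMatchingOn hAne hs
  exact ⟨m, mem_matchingsOn.2 hm⟩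

lemma exists_mem_nkrsGraphs_forall_hits [Nonempty β] {r s : ℕ} (hr : 1 ≤ r)
    (hs : s ≤ Fintype.card β)
    (h : (Fintype.card β : ℝ) ^ Fintype.card ι
      * (1 - s / (Fintype.card β : ℝ) ^ r) ^ (Fintype.card ι).choose r < 1) :
    ∃ H ∈ nkrsGraphs ι β r s, ∀ f : ι → β, Hits f H := by
  have hpos : (0 : ℝ) < #(nkrsGraphs ι β r s) := by
    exact_mod_cast card_pos.2 (nkrsGraphs_nonempty hr hs)
  have hlt : ∑ H ∈ nkrsGraphs ι β r s, (#{f : ι → β | ¬Hits f H} : ℝ)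
      < ∑ _H ∈ nkrsGraphs ι β r s, (1 : ℝ) := by
    rw [sum_card_filter_not_hits_nkrsGraphs, sum_const, nsmul_eq_mul, mul_one, mul_assoc]
    exact mul_lt_of_lt_one_right hpos h
  obtain ⟨H, hH, hH1⟩ := exists_lt_of_sum_lt hlt
  refine ⟨H, hH, fun f => not_not.1 fun hf => ?_⟩
  have : (1 : ℝ) ≤ #{f : ι → β | ¬Hits f H} := by
    exact_mod_cast card_pos.2 ⟨f, mem_filter.2 ⟨mem_univ f, hf⟩⟩
  linarith

end Counting

end IndepTransversal

open IndepTransversal in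
open Classical in
theorem stmt9_general (n k r s : ℕ) (hr : 2 ≤ r) (hk : 1 ≤ k)
    (hsk : s ≤ k)
    (family : Finset (Finset (Finset (Fin n × Fin k))))
    (hfam : family = Finset.univ.filter (fun H =>
      (∀ e ∈ H, e.card = r) ∧
      (∀ e ∈ H, ∀ i : Fin n, (e.filter (fun v => v.1 = i)).card ≤ 1) ∧
      (∀ A : Finset (Fin n), A.card = r →
        (H.filter (fun e => ∀ v ∈ e, v.1 ∈ A)).card = s ∧
        ∀ e ∈ H, ∀ e' ∈ H, (∀ v ∈ e, v.1 ∈ A) → (∀ v ∈ e', v.1 ∈ A) →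
          e ≠ e' → Disjoint e e'))) :
    (∑ H ∈ family, ((Finset.univ.filter (fun f : Fin n → Fin k =>
        ∀ e ∈ H, ¬ e ⊆ Finset.univ.image (fun i => (i, f i)))).card : ℝ))
      = (family.card : ℝ) * (k : ℝ) ^ n * (1 - (s : ℝ) / (k : ℝ) ^ r) ^ (Nat.choose n r) ∧
    ((k : ℝ) ^ n * (1 - (s : ℝ) / (k : ℝ) ^ r) ^ (Nat.choose n r) < 1 →
      ∃ H ∈ family, ¬ ∃ f : Fin n → Fin k,
        ∀ e ∈ H, ¬ e ⊆ Finset.univ.image (fun i => (i, f i))) := by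
  have : Nonempty (Fin k) := ⟨⟨0, hk⟩⟩
  have hfamily : family = nkrsGraphs (Fin n) (Fin k) r s :=
    hfam.trans (filter_congr fun _ _ => by rw [IsNKRSGraph]; congr!)
  have hindep (H : Finset (Finset (Fin n × Fin k))) (f : Fin n → Fin k) :
      (∀ e ∈ H, ¬ e ⊆ univ.image fun i => (i, f i)) ↔ ¬Hits f H := by
    simp [Hits, graphOf]
  have hsum := sum_card_filter_not_hits_nkrsGraphs (ι := Fin n) (β := Fin k) r s
  have hexists :=
    exists_mem_nkrsGraphs_forall_hits (ι := Fin n) (β := Fin k) (r := r) (s := s) (by omega)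
  simp only [Fintype.card_fin] at hsum hexists
  simp only [hindep, not_exists, not_not, hfamily]
  exact ⟨hsum, hexists hsk⟩

open Classical in
/-- Over the family of all `(n,k,r,s)`-graphs (on the fixed vertex set `Fin n × Fin k`
with the columns as parts), the total number of independent transversals equals
`|family| · k^n · (1 - s/k^r)^{C(n,r)}`, i.e. the expected number of independent
transversals of a uniformly random `(n,k,r,s)`-graph is `k^n·(1-s/k^r)^{C(n,r)}`.
Consequently, if this quantity is `< 1`, some `(n,k,r,s)`-graph has no independent
transversal, so `f(k,r,s) < n`. -/
theorem stmt9 (n k r s : ℕ) (hr : 2 ≤ r) (hrn : r ≤ n) (hk : 1 ≤ k) (hs : 1 ≤ s)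
    (hsk : s ≤ k)
    (family : Finset (Finset (Finset (Fin n × Fin k))))
    (hfam : family = Finset.univ.filter (fun H =>
      (∀ e ∈ H, e.card = r) ∧
      (∀ e ∈ H, ∀ i : Fin n, (e.filter (fun v => v.1 = i)).card ≤ 1) ∧
      (∀ A : Finset (Fin n), A.card = r →
        (H.filter (fun e => ∀ v ∈ e, v.1 ∈ A)).card = s ∧
        ∀ e ∈ H, ∀ e' ∈ H, (∀ v ∈ e, v.1 ∈ A) → (∀ v ∈ e', v.1 ∈ A) →
          e ≠ e' → Disjoint e e'))) :
    (∑ H ∈ family, ((Finset.univ.filter (fun f : Fin n → Fin k =>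
        ∀ e ∈ H, ¬ e ⊆ Finset.univ.image (fun i => (i, f i)))).card : ℝ))
      = (family.card : ℝ) * (k : ℝ) ^ n * (1 - (s : ℝ) / (k : ℝ) ^ r) ^ (Nat.choose n r) ∧
    ((k : ℝ) ^ n * (1 - (s : ℝ) / (k : ℝ) ^ r) ^ (Nat.choose n r) < 1 →
      ∃ H ∈ family, ¬ ∃ f : Fin n → Fin k,
        ∀ e ∈ H, ¬ e ⊆ Finset.univ.image (fun i => (i, f i))) :=
  stmt9_general n k r s hr hk hsk family hfam
end

section
/- For every ε > 0 and r ≥ 2 there exists C > 0 such that for all n ≥ r and m ≥ s ≥ C·log n, there is a bipartite graph with parts A of size n and B of size m in which every vertex of A has degree at least (1-ε)·s^{1/r}·m^{1-1/r} and any r vertices of A have at most s common neighbours; that is, w(n,m;r,s) ≥ (1-ε)·s^{1/r}·m^{1-1/r}. -/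
/-!
Join each vertex of `A` to each vertex of `B` independently with probability
`p = (1 - e/2) (s/m)^{1/r}`, where `e = min ε 1`. The degree of a vertex of `A` is then binomial
with mean `(1 - e/2) M`, where `M = s^{1/r} m^{1-1/r} ≥ s`, and the common neighbourhood of an
`r`-set is binomial with mean `(1 - e/2)^r s ≤ (1 - e/2) s`. The exponential-moment (Chernoff)
bound with parameter `t = e/4` gives probability at most `exp (-e² s / 16) ≤ n^{-(r+2)}` to each
of the `n` events "degree `≤ (1 - e) M`" and the `C(n, r)` events "at least `s` common
neighbours", as soon as `s ≥ 16 (r + 2) e⁻² log n`. Since `n + C(n, r) < n^{r+2}`, some graph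
avoids all of them.
-/

open Finset Real

section ProbabilisticMethod

/- A finite probability space is a weight `w` with `∑ ω, w ω = 1`; the probability of an event
`E` is `∑ ω ∈ E, w ω` (or `∑ ω with E ω, w ω`). -/
variable {Ω ι : Type*} [Fintype Ω] {w : Ω → ℝ}

theorem exists_forall_notMem_of_sum_sum_lt_one (hw : ∀ ω, 0 ≤ w ω) (hw1 : ∑ ω, w ω = 1)
    (I : Finset ι) (E : ι → Finset Ω) (h : ∑ i ∈ I, ∑ ω ∈ E i, w ω < 1) :
    ∃ ω, ∀ i ∈ I, ω ∉ E i := by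
  classical
  by_contra! hbad
  have hcover : ∀ ω, w ω ≤ ∑ i ∈ I, if ω ∈ E i then w ω else 0 := fun ω => by
    obtain ⟨i, hi, hω⟩ := hbad ω
    calc w ω = if ω ∈ E i then w ω else 0 := (if_pos hω).symm
      _ ≤ _ := single_le_sum (f := fun i => if ω ∈ E i then w ω else 0)
          (fun j _ => by split_ifs <;> simp [hw]) hi
  have := sum_le_sum fun ω (_ : ω ∈ univ) => hcover ω
  rw [hw1, sum_comm] at this
  simp only [← sum_filter, filter_mem_eq_inter, univ_inter] at this
  linarith

theorem sum_filter_le_exp_neg_mul_sum_mul_exp (hw : ∀ ω, 0 ≤ w ω) (E : Ω → Prop)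
    [DecidablePred E] (Y : Ω → ℝ) (θ : ℝ) (hE : ∀ ω, E ω → θ ≤ Y ω) :
    ∑ ω with E ω, w ω ≤ exp (-θ) * ∑ ω, w ω * exp (Y ω) := by
  rw [mul_sum]
  calc ∑ ω with E ω, w ω ≤ ∑ ω with E ω, exp (-θ) * (w ω * exp (Y ω)) := by
        refine sum_le_sum fun ω hω => ?_
        have h1 : 1 ≤ exp (-θ) * exp (Y ω) := by
          rw [← exp_add]
          exact one_le_exp (by linarith [hE ω (mem_filter.1 hω).2])
        nlinarith [hw ω]
    _ ≤ ∑ ω, exp (-θ) * (w ω * exp (Y ω)) :=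
        sum_le_sum_of_subset_of_nonneg (filter_subset _ _) fun ω _ _ => by
          have := hw ω
          positivity

end ProbabilisticMethod

theorem one_add_pow_le_exp_mul {x : ℝ} (hx : -1 ≤ x) (k : ℕ) : (1 + x) ^ k ≤ exp (k * x) := by
  rw [exp_nat_mul]
  exact pow_le_pow_left₀ (by linarith) (by linarith [add_one_le_exp x]) k

section Binomial

/- Under the product weight `∏ b, w (ψ b)` on `β → α`, the count `#{b | P (ψ b)}` is binomial
with `card β` trials of success probability `q = ∑ a with P a, w a`. -/
variable {α β : Type*} [Fintype α] [Fintype β] [DecidableEq β] {w : α → ℝ}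
  (P : α → Prop) [DecidablePred P]

theorem sum_prod_eq_pow_sum : ∑ ψ : β → α, ∏ b, w (ψ b) = (∑ a, w a) ^ Fintype.card β := by
  rw [← Fintype.prod_sum (fun (_ : β) a => w a), prod_const, card_univ]

theorem sum_prod_mul_exp_card_filter (t : ℝ) :
    ∑ ψ : β → α, (∏ b, w (ψ b)) * exp (t * #{b | P (ψ b)})
      = (∑ a, w a + (exp t - 1) * ∑ a with P a, w a) ^ Fintype.card β := by
  have hexp : ∀ ψ : β → α,
      exp (t * #{b | P (ψ b)}) = ∏ b, if P (ψ b) then exp t else 1 := fun ψ => by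
    rw [prod_ite, prod_const_one, mul_one, prod_const, mul_comm, exp_nat_mul]
  have hsum : ∑ a, w a * (if P a then exp t else 1)
      = ∑ a, w a + (exp t - 1) * ∑ a with P a, w a := by
    rw [sum_filter, mul_sum, ← sum_add_distrib]
    exact sum_congr rfl fun a _ => by split_ifs <;> ring
  simp only [hexp, ← prod_mul_distrib]
  rw [← hsum, ← sum_prod_eq_pow_sum (w := fun a => w a * if P a then exp t else 1)]

variable {P} {q : ℝ} (hw : ∀ a, 0 ≤ w a) (hw1 : ∑ a, w a = 1) (hq : ∑ a with P a, w a = q)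
include hw hw1 hq

theorem sum_prod_mul_exp_card_filter_le {x : ℝ} (hx : |x| ≤ 1) :
    ∑ ψ : β → α, (∏ b, w (ψ b)) * exp (x * #{b | P (ψ b)})
      ≤ exp (Fintype.card β * q * (x + x ^ 2)) := by
  have hq0 : 0 ≤ q := hq ▸ sum_nonneg fun a _ => hw a
  have hq1 : q ≤ 1 := hw1 ▸ hq ▸
    sum_le_sum_of_subset_of_nonneg (filter_subset _ _) fun a _ _ => hw a
  have hexp : exp x - 1 ≤ x + x ^ 2 := by
    linarith [(abs_le.1 (abs_exp_sub_one_sub_id_le hx)).2]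
  rw [sum_prod_mul_exp_card_filter, hw1, hq]
  calc (1 + (exp x - 1) * q) ^ Fintype.card β
      ≤ exp (Fintype.card β * ((exp x - 1) * q)) :=
        one_add_pow_le_exp_mul (by nlinarith [exp_pos x]) _
    _ ≤ exp (Fintype.card β * q * (x + x ^ 2)) := by
        rw [mul_assoc, mul_comm q]
        gcongr

theorem sum_filter_card_filter_le_le_exp {t : ℝ} (ht0 : 0 ≤ t) (ht1 : t ≤ 1) (θ : ℝ) :
    ∑ ψ : β → α with (#{b | P (ψ b)} : ℝ) ≤ θ, ∏ b, w (ψ b)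
      ≤ exp (t * θ - Fintype.card β * q * (t - t ^ 2)) := by
  have hx : |-t| ≤ 1 := by rwa [abs_neg, abs_of_nonneg ht0]
  calc _ ≤ exp (-(-t * θ)) * ∑ ψ : β → α, (∏ b, w (ψ b)) * exp (-t * #{b | P (ψ b)}) :=
        sum_filter_le_exp_neg_mul_sum_mul_exp (fun ψ => prod_nonneg fun b _ => hw _) _ _ _
          fun ψ hψ => by nlinarith
    _ ≤ exp (t * θ) * exp (Fintype.card β * q * (-t + (-t) ^ 2)) := by
        rw [neg_mul, neg_neg]
        gcongr
        exact sum_prod_mul_exp_card_filter_le hw hw1 hq hx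
    _ = exp (t * θ - Fintype.card β * q * (t - t ^ 2)) := by rw [← exp_add]; ring_nf

theorem sum_filter_le_card_filter_le_exp {t : ℝ} (ht0 : 0 ≤ t) (ht1 : t ≤ 1) (θ : ℝ) :
    ∑ ψ : β → α with θ ≤ (#{b | P (ψ b)} : ℝ), ∏ b, w (ψ b)
      ≤ exp (Fintype.card β * q * (t + t ^ 2) - t * θ) := by
  have hx : |t| ≤ 1 := by rwa [abs_of_nonneg ht0]
  calc _ ≤ exp (-(t * θ)) * ∑ ψ : β → α, (∏ b, w (ψ b)) * exp (t * #{b | P (ψ b)}) :=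
        sum_filter_le_exp_neg_mul_sum_mul_exp (fun ψ => prod_nonneg fun b _ => hw _) _ _ _
          fun ψ hψ => by nlinarith
    _ ≤ exp (-(t * θ)) * exp (Fintype.card β * q * (t + t ^ 2)) := by
        gcongr
        exact sum_prod_mul_exp_card_filter_le hw hw1 hq hx
    _ = exp (Fintype.card β * q * (t + t ^ 2) - t * θ) := by rw [← exp_add]; ring_nf

end Binomial

section Bernoulli

def bernoulliWeight (p : ℝ) (x : Bool) : ℝ := if x then p else 1 - p

variable {ι : Type*} [Fintype ι] {p : ℝ}

theorem prod_bernoulliWeight_nonneg (hp0 : 0 ≤ p) (hp1 : p ≤ 1) (y : ι → Bool) :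
    0 ≤ ∏ i, bernoulliWeight p (y i) :=
  prod_nonneg fun i _ => by unfold bernoulliWeight; split_ifs <;> linarith

theorem sum_prod_bernoulliWeight [DecidableEq ι] :
    ∑ y : ι → Bool, ∏ i, bernoulliWeight p (y i) = 1 := by
  rw [sum_prod_eq_pow_sum]
  simp [bernoulliWeight]

theorem sum_filter_forall_prod_bernoulliWeight [DecidableEq ι] (T : Finset ι) :
    ∑ y : ι → Bool with ∀ i ∈ T, y i, ∏ i, bernoulliWeight p (y i) = p ^ #T := by
  set g : ι → Bool → ℝ := fun i x => if i ∈ T ∧ x = false then 0 else bernoulliWeight p x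
  have hg : ∀ y : ι → Bool,
      (if ∀ i ∈ T, y i then ∏ i, bernoulliWeight p (y i) else 0) = ∏ i, g i (y i) := fun y => by
    split_ifs with hy
    · exact prod_congr rfl fun i _ => by simp +contextual [g, hy i]
    · obtain ⟨i, hi, hyi⟩ : ∃ i ∈ T, ¬ y i := by simpa using hy
      exact (prod_eq_zero (mem_univ i) (by simp [g, hi, hyi])).symm
  rw [sum_filter, sum_congr rfl fun y _ => hg y, ← Fintype.prod_sum]
  have hgsum : ∀ i, ∑ x, g i x = if i ∈ T then p else 1 := fun i => by
    by_cases hi : i ∈ T <;> simp [g, hi, bernoulliWeight]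
  simp only [hgsum, prod_ite_mem, univ_inter, prod_const]

end Bernoulli

section RandomBipartiteGraph

/- `ψ b a` records whether `b ∈ B` is joined to `a ∈ A`; the column `ψ b` is a Bernoulli
vector, so the degree of `a` is the common neighbourhood of `{a}`. -/
variable {A B : Type*} [Fintype A] [DecidableEq A] [Fintype B] [DecidableEq B] {p t : ℝ}

theorem sum_filter_card_le_le_exp (hp0 : 0 ≤ p) (hp1 : p ≤ 1) (ht0 : 0 ≤ t) (ht1 : t ≤ 1)
    (a : A) (θ : ℝ) :
    ∑ ψ : B → A → Bool with (#{b | ψ b a} : ℝ) ≤ θ, ∏ b, ∏ a, bernoulliWeight p (ψ b a)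
      ≤ exp (t * θ - Fintype.card B * p * (t - t ^ 2)) := by
  have hq : ∑ y : A → Bool with y a, ∏ a, bernoulliWeight p (y a) = p := by
    simpa using sum_filter_forall_prod_bernoulliWeight (p := p) {a}
  exact sum_filter_card_filter_le_le_exp (prod_bernoulliWeight_nonneg hp0 hp1)
    sum_prod_bernoulliWeight hq ht0 ht1 θ

theorem sum_filter_le_card_forall_le_exp (hp0 : 0 ≤ p) (hp1 : p ≤ 1) (ht0 : 0 ≤ t)
    (ht1 : t ≤ 1) (T : Finset A) (θ : ℝ) :
    ∑ ψ : B → A → Bool with θ ≤ (#{b | ∀ a ∈ T, ψ b a} : ℝ),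
        ∏ b, ∏ a, bernoulliWeight p (ψ b a)
      ≤ exp (Fintype.card B * p ^ #T * (t + t ^ 2) - t * θ) :=
  sum_filter_le_card_filter_le_exp (prod_bernoulliWeight_nonneg hp0 hp1)
    sum_prod_bernoulliWeight (sum_filter_forall_prod_bernoulliWeight T) ht0 ht1 θ

theorem exists_adjacency_of_tail_sum_lt_one {r : ℕ} {D θ : ℝ} (hp0 : 0 ≤ p) (hp1 : p ≤ 1)
    (ht0 : 0 ≤ t) (ht1 : t ≤ 1)
    (h : Fintype.card A * exp (t * D - Fintype.card B * p * (t - t ^ 2))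
      + (Fintype.card A).choose r * exp (Fintype.card B * p ^ r * (t + t ^ 2) - t * θ) < 1) :
    ∃ ψ : B → A → Bool, (∀ a, D < #{b | ψ b a}) ∧
      ∀ T : Finset A, #T = r → (#{b | ∀ a ∈ T, ψ b a} : ℝ) < θ := by
  let bad : A ⊕ Finset A → Finset (B → A → Bool) :=
    Sum.elim (γ := Finset (B → A → Bool)) (fun a => {ψ | (#{b | ψ b a} : ℝ) ≤ D})
      (fun T => {ψ | θ ≤ #{b | ∀ a ∈ T, ψ b a}})
  have hbad : ∑ i ∈ univ.disjSum (powersetCard r univ), ∑ ψ ∈ bad i,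
      ∏ b, ∏ a, bernoulliWeight p (ψ b a) < 1 := by
    refine lt_of_le_of_lt ?_ h
    rw [sum_disjSum]
    simp only [bad, Sum.elim_inl, Sum.elim_inr]
    gcongr ?_ + ?_
    · calc _ ≤ ∑ _a : A, exp (t * D - Fintype.card B * p * (t - t ^ 2)) :=
            sum_le_sum fun a _ => sum_filter_card_le_le_exp hp0 hp1 ht0 ht1 a D
        _ = _ := by simp
    · calc _ ≤ ∑ _T ∈ powersetCard r (univ : Finset A),
            exp (Fintype.card B * p ^ r * (t + t ^ 2) - t * θ) := sum_le_sum fun T hT => by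
              rw [← (mem_powersetCard.1 hT).2]
              exact sum_filter_le_card_forall_le_exp hp0 hp1 ht0 ht1 T θ
        _ = _ := by simp
  obtain ⟨ψ, hψ⟩ := exists_forall_notMem_of_sum_sum_lt_one
    (fun ψ => prod_nonneg fun b _ => prod_bernoulliWeight_nonneg hp0 hp1 (ψ b))
    ((sum_prod_eq_pow_sum (w := fun y : A → Bool => ∏ a, bernoulliWeight p (y a))).trans
      (by rw [sum_prod_bernoulliWeight, one_pow])) _ _ hbad
  refine ⟨ψ, fun a => ?_, fun T hT => ?_⟩
  · simpa [bad] using hψ (.inl a) (by simp)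
  · simpa [bad] using hψ (.inr T) (by simp [hT])

end RandomBipartiteGraph

theorem le_rpow_mul_rpow_one_sub {s m c : ℝ} (hs : 0 ≤ s) (hsm : s ≤ m) (hc : c ≤ 1) :
    s ≤ s ^ c * m ^ (1 - c) := by
  calc s = s ^ c * s ^ (1 - c) := by
        rw [← rpow_add' hs (by norm_num), add_sub_cancel, rpow_one]
    _ ≤ s ^ c * m ^ (1 - c) := by gcongr

theorem exists_edge_probability {r : ℕ} {s m δ : ℝ} (hr : r ≠ 0) (hs : 0 ≤ s) (hsm : s ≤ m)
    (hm : 0 < m) (hδ0 : 0 ≤ δ) (hδ1 : δ ≤ 1) :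
    ∃ p : ℝ, 0 ≤ p ∧ p ≤ 1 ∧ m * p = (1 - δ) * (s ^ ((1 : ℝ) / r) * m ^ (1 - (1 : ℝ) / r)) ∧
      m * p ^ r ≤ (1 - δ) * s := by
  have hsm0 : 0 ≤ s / m := div_nonneg hs hm.le
  refine ⟨(1 - δ) * (s / m) ^ ((1 : ℝ) / r), by positivity, mul_le_one₀ (by linarith)
    (by positivity) (rpow_le_one hsm0 ((div_le_one hm).2 hsm) (by positivity)), ?_, ?_⟩
  · rw [div_rpow hs hm.le, rpow_sub hm, rpow_one]
    field_simp
  · rw [mul_pow, one_div, rpow_inv_natCast_pow hsm0 hr, mul_left_comm,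
      mul_div_cancel₀ _ hm.ne']
    gcongr
    exact pow_le_of_le_one (by linarith) (by linarith) hr

theorem add_choose_lt_pow {n r : ℕ} (hn : 2 ≤ n) (hr : r ≠ 0) :
    n + n.choose r < n ^ (r + 2) := by
  have h1 : n ≤ n ^ r := Nat.le_self_pow hr n
  have h2 : n.choose r ≤ n ^ r := Nat.choose_le_pow n r
  have h3 : 4 ≤ n ^ 2 := by nlinarith
  have h4 : 1 ≤ n ^ r := Nat.one_le_pow _ _ (by omega)
  rw [pow_add]
  nlinarith

theorem add_choose_mul_exp_lt_one {n r : ℕ} {x : ℝ} (hn : 2 ≤ n) (hr : r ≠ 0)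
    (hx : (r + 2) * log n ≤ x) : (n + n.choose r) * exp (-x) < 1 := by
  have hcount : (n + n.choose r : ℝ) < n ^ (r + 2) := by
    exact_mod_cast add_choose_lt_pow hn hr
  have hpow : (n : ℝ) ^ (r + 2) * exp (-x) ≤ 1 := by
    rw [← exp_log (by positivity : (0 : ℝ) < n ^ (r + 2)), log_pow, ← exp_add]
    exact exp_le_one_iff.2 (by push_cast; linarith)
  calc _ < (n : ℝ) ^ (r + 2) * exp (-x) := by gcongr
    _ ≤ 1 := hpow

theorem chernoff_exponents_le {e s M μ ν : ℝ} (he0 : 0 < e) (hs : 0 ≤ s) (hsM : s ≤ M)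
    (hμ : μ = (1 - e / 2) * M) (hν : ν ≤ (1 - e / 2) * s) :
    e / 4 * ((1 - e) * M) - μ * (e / 4 - (e / 4) ^ 2) ≤ -(e ^ 2 / 16 * s) ∧
      ν * (e / 4 + (e / 4) ^ 2) - e / 4 * s ≤ -(e ^ 2 / 16 * s) := by
  constructor
  · subst hμ
    nlinarith [pow_pos he0 3, pow_pos he0 2]
  · nlinarith [pow_pos he0 3, pow_pos he0 2]

theorem tail_sum_lt_one {n m r : ℕ} {e s M p : ℝ} (hn : 2 ≤ n) (hr : r ≠ 0) (he0 : 0 < e)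
    (hs : 0 ≤ s) (hsM : s ≤ M) (hlog : (r + 2) * log n ≤ e ^ 2 / 16 * s)
    (hmp : m * p = (1 - e / 2) * M) (hmpr : m * p ^ r ≤ (1 - e / 2) * s) :
    n * exp (e / 4 * ((1 - e) * M) - m * p * (e / 4 - (e / 4) ^ 2))
      + n.choose r * exp (m * p ^ r * (e / 4 + (e / 4) ^ 2) - e / 4 * s) < 1 := by
  obtain ⟨hlow, hup⟩ := chernoff_exponents_le he0 hs hsM hmp hmpr
  calc _ ≤ (n + n.choose r) * exp (-(e ^ 2 / 16 * s)) := by rw [add_mul]; gcongr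
    _ < 1 := add_choose_mul_exp_lt_one hn hr hlog

/-- Probabilistic lower bound for `w(n,m;r,s)`: for all `ε > 0` and `r ≥ 2` there is
`C > 0` such that whenever `n ≥ r` and `m ≥ s ≥ C·log n`, there is a bipartite graph
(given by `N : Fin n → Finset (Fin m)`) in which every vertex of `A` has degree at least
`(1-ε)·s^{1/r}·m^{1-1/r}` and any `r` vertices of `A` have at most `s` common
neighbours. -/
theorem stmt10 (ε : ℝ) (hε : 0 < ε) (r : ℕ) (hr : 2 ≤ r) :
    ∃ C : ℝ, 0 < C ∧ ∀ n m s : ℕ, r ≤ n → s ≤ m → C * Real.log n ≤ s →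
      ∃ N : Fin n → Finset (Fin m),
        (∀ a, (1 - ε) * (s : ℝ) ^ ((1 : ℝ) / r) * (m : ℝ) ^ (1 - (1 : ℝ) / r)
          ≤ (N a).card) ∧
        (∀ T : Finset (Fin n), T.card = r →
          (Finset.univ.filter (fun b : Fin m => ∀ a ∈ T, b ∈ N a)).card ≤ s) := by
  obtain ⟨e, he0, he1, heε⟩ : ∃ e, 0 < e ∧ e ≤ 1 ∧ e ≤ ε :=
    ⟨min ε 1, lt_min hε one_pos, min_le_right _ _, min_le_left _ _⟩
  refine ⟨16 * (r + 2) / e ^ 2, by positivity, fun n m s hn hsm hs => ?_⟩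
  have hn2 : 2 ≤ n := hr.trans hn
  have hs0 : 0 < (s : ℝ) :=
    (mul_pos (by positivity) (log_pos (by exact_mod_cast hn2))).trans_le hs
  have hsm' : (s : ℝ) ≤ m := by exact_mod_cast hsm
  have hlog : ((r : ℝ) + 2) * log n ≤ e ^ 2 / 16 * s := by
    calc ((r : ℝ) + 2) * log n = e ^ 2 / 16 * (16 * (r + 2) / e ^ 2 * log n) := by field_simp
      _ ≤ e ^ 2 / 16 * s := by gcongr
  set M := (s : ℝ) ^ ((1 : ℝ) / r) * (m : ℝ) ^ (1 - (1 : ℝ) / r)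
  have hsM : (s : ℝ) ≤ M := le_rpow_mul_rpow_one_sub hs0.le hsm'
    (div_le_one_of_le₀ (by exact_mod_cast (by omega : 1 ≤ r)) (by positivity))
  obtain ⟨p, hp0, hp1, hmp, hmpr⟩ := exists_edge_probability (r := r) (δ := e / 2) (by omega)
    hs0.le hsm' (hs0.trans_le hsm') (by positivity) (by linarith)
  obtain ⟨ψ, hdeg, hcodeg⟩ := exists_adjacency_of_tail_sum_lt_one (A := Fin n) (B := Fin m)
    (t := e / 4) hp0 hp1 (by positivity) (by linarith) (by
      simpa using tail_sum_lt_one hn2 (by omega) he0 hs0.le hsM hlog hmp hmpr)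
  refine ⟨fun a => {b | ψ b a}, fun a => ?_, fun T hT => ?_⟩
  · calc _ = (1 - ε) * M := by ring
      _ ≤ (1 - e) * M := by gcongr
      _ ≤ _ := (hdeg a).le
  · have hT' := (hcodeg T hT).le
    rw [Nat.cast_le] at hT'
    convert hT' using 2
    ext b
    simp
end

section
/- Let G be a graph with vertex partition V_1, ..., V_m in which each part V_i has size exactly n ≥ 2eD, each part is an independent set, and |V_i|·d̄_G(V_i) + |V_j|·d̄_G(V_j) ≤ 2nD for all i ≠ j. Choosing v_i ∈ V_i uniformly and independently, the probability that {v_1,...,v_m} contains both endpoints of some edge is strictly less than 1; hence an independent transversal exists. -/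
/-!
This is the Lovász Local Lemma on the uniform space of transversals `f ∈ ∏ i, P i`, where
`pt v` is the index of the part containing `v`. The bad event for an edge `uv` is that `f`
picks both `u` and `v`. It has probability `1 / n²` and is independent of any family of edge
events that avoid the parts of `u` and `v`, since those events only read the other
coordinates. Covering the edges that meet these two parts by the incidence sets of their
vertices shows that at most `2nD - 2` other edges meet them. So, with `t = ⌊2nD⌋` and
`x = 1 / t`, the local lemma condition `1 / n² ≤ x (1 - x) ^ (t - 2)` follows from
`e t ≤ n²`. The local lemma then bounds the probability that no bad event occurs below by
`(1 - x) ^ |E(G)| > 0`.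
-/

open Finset Function Fintype

section LocalLemma

open Classical

variable {Ω ι : Type*} (s : Finset Ω) (A : ι → Ω → Prop)

noncomputable def avoiding (S : Finset ι) : Finset Ω := s.filter fun ω => ∀ e ∈ S, ¬ A e ω

variable {s A}

lemma avoiding_empty : avoiding s A ∅ = s := by
  simp [avoiding]

lemma avoiding_anti {S T : Finset ι} (h : S ⊆ T) : avoiding s A T ⊆ avoiding s A S :=
  monotone_filter_right _ fun _ _ hT e he => hT e (h he)

lemma card_avoiding_insert_add [DecidableEq ι] (e : ι) (S : Finset ι) :
    #(avoiding s A (insert e S)) + #((avoiding s A S).filter (A e)) = #(avoiding s A S) := by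
  rw [add_comm, ← card_filter_add_card_filter_not (s := avoiding s A S) (A e)]
  congr 2
  simp only [avoiding, filter_filter, forall_mem_insert, and_comm]

lemma one_sub_pow_mul_card_avoiding_le [DecidableEq ι] {x : ℝ} (hx : x ≤ 1) (R T : Finset ι)
    (h : ∀ e ∈ T, ∀ T' ⊆ T, e ∉ T' →
      (#((avoiding s A (R ∪ T')).filter (A e)) : ℝ) ≤ x * #(avoiding s A (R ∪ T'))) :
    (1 - x) ^ #T * #(avoiding s A R) ≤ #(avoiding s A (R ∪ T)) := by
  induction T using Finset.induction_on with
  | empty => simp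
  | @insert e T heT ih =>
    have hT := ih fun e' he' T' hT' =>
      h e' (mem_insert_of_mem he') T' (hT'.trans (subset_insert _ _))
    have he := h e (mem_insert_self _ _) T (subset_insert _ _) heT
    have hsplit : (#(avoiding s A (R ∪ insert e T)) : ℝ)
        + #((avoiding s A (R ∪ T)).filter (A e)) = #(avoiding s A (R ∪ T)) := by
      rw [union_insert]; exact_mod_cast card_avoiding_insert_add e (R ∪ T)
    rw [card_insert_of_notMem heT, pow_succ, mul_right_comm]
    nlinarith [mul_le_mul_of_nonneg_left hT (sub_nonneg.2 hx)]

/-- The counting form of `P(A e | no A f, f ∈ S) ≤ x`. The hypothesis `hA` combines mutual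
independence of `A e` from the events outside its `Γ`-neighbourhood with the local lemma bound. -/
lemma card_filter_avoiding_le [DecidableEq ι] {x : ℝ} (hx₀ : 0 ≤ x) (hx₁ : x ≤ 1)
    {E : Finset ι} (Γ : ι → ι → Prop)
    (hA : ∀ e ∈ E, ∀ S ⊆ E, e ∉ S → (∀ f ∈ S, ¬ Γ e f) →
      (#((avoiding s A S).filter (A e)) : ℝ)
        ≤ x * (1 - x) ^ #((E.erase e).filter (Γ e)) * #(avoiding s A S))
    (S : Finset ι) (hS : S ⊆ E) (e : ι) (he : e ∈ E) (heS : e ∉ S) :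
    (#((avoiding s A S).filter (A e)) : ℝ) ≤ x * #(avoiding s A S) := by
  induction S using Finset.strongInduction generalizing e with
  | H S ih =>
  set S₁ := S.filter fun f => ¬ Γ e f
  set S₂ := S.filter (Γ e)
  have hS₁ : S₁ ⊆ S := filter_subset _ _
  have hS₂ : S₂ ⊆ (E.erase e).filter (Γ e) := fun f hf => by
    obtain ⟨hfS, hΓ⟩ := mem_filter.1 hf
    exact mem_filter.2 ⟨mem_erase.2 ⟨ne_of_mem_of_not_mem hfS heS, hS hfS⟩, hΓ⟩
  -- Numerator: drop the neighbours `S₂` and use `hA`. Denominator: adding the events of `S₂`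
  -- one at a time costs a factor `1 - x` each, by the induction hypothesis.
  have hchain := one_sub_pow_mul_card_avoiding_le (s := s) (A := A) hx₁ S₁ S₂
    fun f hf T hT hfT => by
      have hfS := (mem_filter.1 hf).1
      have hf₁ : f ∉ S₁ := fun h => (mem_filter.1 h).2 (mem_filter.1 hf).2
      have hsub : S₁ ∪ T ⊆ S := union_subset hS₁ (hT.trans (filter_subset _ _))
      exact ih _ ((ssubset_iff_of_subset hsub).2 ⟨f, hfS, by simp [hf₁, hfT]⟩)
        (hsub.trans hS) f (hS hfS) (by simp [hf₁, hfT])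
  have hpow : (1 - x) ^ #((E.erase e).filter (Γ e)) ≤ (1 - x) ^ #S₂ :=
    pow_le_pow_of_le_one (by linarith) (by linarith) (card_le_card hS₂)
  calc (#((avoiding s A S).filter (A e)) : ℝ)
      ≤ #((avoiding s A S₁).filter (A e)) := by
        exact_mod_cast card_le_card (filter_subset_filter _ (avoiding_anti hS₁))
    _ ≤ x * (1 - x) ^ #((E.erase e).filter (Γ e)) * #(avoiding s A S₁) :=
        hA e he S₁ (hS₁.trans hS) (fun h => heS (hS₁ h)) fun f hf => (mem_filter.1 hf).2
    _ ≤ x * ((1 - x) ^ #S₂ * #(avoiding s A S₁)) := by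
        rw [mul_assoc]; gcongr
    _ ≤ x * #(avoiding s A S) := by
        rw [← filter_union_filter_not_eq (Γ e) S, union_comm]
        exact mul_le_mul_of_nonneg_left hchain hx₀

theorem one_sub_pow_mul_card_le_card_avoiding [DecidableEq ι] {x : ℝ} (hx₀ : 0 ≤ x)
    (hx₁ : x ≤ 1) {E : Finset ι} (Γ : ι → ι → Prop)
    (hA : ∀ e ∈ E, ∀ S ⊆ E, e ∉ S → (∀ f ∈ S, ¬ Γ e f) →
      (#((avoiding s A S).filter (A e)) : ℝ)
        ≤ x * (1 - x) ^ #((E.erase e).filter (Γ e)) * #(avoiding s A S)) :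
    (1 - x) ^ #E * #s ≤ #(avoiding s A E) := by
  simpa [avoiding_empty] using one_sub_pow_mul_card_avoiding_le hx₁ ∅ E
    fun e he T hT heT => by
      rw [empty_union]
      exact card_filter_avoiding_le hx₀ hx₁ Γ hA T hT e he heT

end LocalLemma

theorem card_filter_piFinset_eq_card_mul {ι α : Type*} [Fintype ι] [DecidableEq ι]
    [DecidableEq α] {t : ι → Finset α} {Q : (ι → α) → Prop} [DecidablePred Q] {i : ι}
    (hQ : ∀ f b, Q (update f i b) ↔ Q f) {a : α} (ha : a ∈ t i) :
    #((piFinset t).filter Q) = #(t i) * #((piFinset t).filter fun f => Q f ∧ f i = a) := by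
  rw [card_eq_sum_card_fiberwise (f := fun f => f i) (t := t i)
    fun f hf => mem_piFinset.1 (mem_filter.1 hf).1 i, ← smul_eq_mul, ← sum_const]
  refine sum_congr rfl fun b _ => card_bij' (fun f _ => update f i a) (fun f _ => update f i b)
    ?_ ?_ ?_ ?_
  · intro f hf
    simp only [mem_filter, mem_piFinset] at hf ⊢
    refine ⟨fun j => ?_, (hQ f a).2 hf.1.2, update_self ..⟩
    rcases eq_or_ne j i with rfl | hj
    · simpa
    · simpa [hj] using hf.1.1 j
  · intro f hf
    simp only [mem_filter, mem_piFinset] at hf ⊢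
    refine ⟨⟨fun j => ?_, (hQ f b).2 hf.2.1⟩, update_self ..⟩
    rcases eq_or_ne j i with rfl | hj
    · simpa
    · simpa [hj] using hf.1 j
  · intro f hf
    simp [← (mem_filter.1 hf).2]
  · intro f hf
    simp [← (mem_filter.1 hf).2.2]

lemma exp_neg_one_le_one_sub_inv_pow {k t : ℕ} (hk : k < t) :
    Real.exp (-1) ≤ (1 - (t : ℝ)⁻¹) ^ k := by
  obtain ⟨n, rfl⟩ : ∃ n, t = n + 1 := ⟨t - 1, by omega⟩
  have h₀ : 0 ≤ 1 - ((n + 1 : ℕ) : ℝ)⁻¹ := sub_nonneg.2 (Nat.cast_inv_le_one _)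
  calc Real.exp (-1) = (Real.exp 1)⁻¹ := Real.exp_neg 1
    _ ≤ ((1 + (n : ℝ)⁻¹) ^ n)⁻¹ := by
        gcongr
        exact Real.one_add_inv_pow_le_exp
    _ = (1 - ((n + 1 : ℕ) : ℝ)⁻¹) ^ n := by
        rcases eq_or_ne n 0 with rfl | hn
        · simp
        · rw [← inv_pow]; congr 1; push_cast; field_simp; ring_nf
    _ ≤ (1 - ((n + 1 : ℕ) : ℝ)⁻¹) ^ k :=
        pow_le_pow_of_le_one h₀ (sub_le_self _ (by positivity)) (by omega)

section Transversal

open Classical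

variable {V : Type*} {m : ℕ} (pt : V → Fin m)

def Picks (e : Sym2 V) (f : Fin m → V) : Prop := ∀ w ∈ e, f (pt w) = w

def SharePart (e e' : Sym2 V) : Prop := ∃ w ∈ e, ∃ w' ∈ e', pt w = pt w'

variable {pt}

lemma picks_mk_iff {u v : V} {f : Fin m → V} :
    Picks pt s(u, v) f ↔ f (pt u) = u ∧ f (pt v) = v := by
  simp [Picks]

lemma picks_update_iff {e : Sym2 V} {i : Fin m} (he : ∀ w ∈ e, pt w ≠ i) (f : Fin m → V)
    (b : V) :
    Picks pt e (update f i b) ↔ Picks pt e f := by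
  refine forall₂_congr fun w hw => ?_
  rw [update_of_ne (he w hw)]

lemma card_filter_sharePart_lt [Fintype V] [DecidableEq V] (G : SimpleGraph V) [DecidableRel G.Adj]
    {P : Fin m → Finset V} (hpt : ∀ v, v ∈ P (pt v)) {u v : V} (huv : G.Adj u v) :
    #(G.edgeFinset.filter (SharePart pt s(u, v)))
      < ∑ w ∈ P (pt u), G.degree w + ∑ w ∈ P (pt v), G.degree w := by
  have hinc : ∀ {w e}, e ∈ G.edgeFinset → w ∈ e → e ∈ G.incidenceFinset w :=
    fun he hw => (G.mem_incidenceFinset _ _).2 ⟨G.mem_edgeFinset.1 he, hw⟩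
  have heu : s(u, v) ∈ G.incidenceFinset u := hinc (G.mem_edgeFinset.2 huv) (by simp)
  have hsub : G.edgeFinset.filter (SharePart pt s(u, v)) ⊆
      ((G.incidenceFinset u).erase s(u, v) ∪ ((P (pt u)).erase u).biUnion (G.incidenceFinset ·))
        ∪ (P (pt v)).biUnion (G.incidenceFinset ·) := by
    intro e he
    obtain ⟨heE, w, hw, w', hw', hpw⟩ := mem_filter.1 he
    simp only [mem_union, mem_biUnion, mem_erase]
    rcases Sym2.mem_iff.1 hw with rfl | rfl
    · by_cases hwu : w' = w
      · subst hwu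
        by_cases hev : e = s(w', v)
        · exact Or.inr ⟨v, hpt v, hinc heE (by simp [hev])⟩
        · exact Or.inl (Or.inl ⟨hev, hinc heE hw'⟩)
      · exact Or.inl (Or.inr ⟨w', ⟨hwu, hpw ▸ hpt w'⟩, hinc heE hw'⟩)
    · exact Or.inr ⟨w', hpw ▸ hpt w', hinc heE hw'⟩
  have hdeg : 0 < G.degree u :=
    (card_pos.2 ⟨_, heu⟩).trans_eq (G.card_incidenceFinset_eq_degree u)
  calc #(G.edgeFinset.filter (SharePart pt s(u, v)))
      ≤ (#((G.incidenceFinset u).erase s(u, v))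
          + #(((P (pt u)).erase u).biUnion (G.incidenceFinset ·)))
        + #((P (pt v)).biUnion (G.incidenceFinset ·)) :=
        (card_le_card hsub).trans <| (card_union_le _ _).trans <| by gcongr; exact card_union_le _ _
    _ ≤ (G.degree u - 1 + ∑ w ∈ (P (pt u)).erase u, G.degree w)
          + ∑ w ∈ P (pt v), G.degree w := by
        rw [card_erase_of_mem heu, G.card_incidenceFinset_eq_degree]
        gcongr <;> exact card_biUnion_le.trans_eq
          (sum_congr rfl fun w _ => G.card_incidenceFinset_eq_degree w)
    _ < ∑ w ∈ P (pt u), G.degree w + ∑ w ∈ P (pt v), G.degree w := by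
        rw [← add_sum_erase _ _ (hpt u)]
        omega

lemma card_filter_picks_mul [DecidableEq V] {P : Fin m → Finset V} {Q : (Fin m → V) → Prop}
    {u v : V} (hne : pt u ≠ pt v) (hu : u ∈ P (pt u)) (hv : v ∈ P (pt v))
    (hQ : ∀ f i b, i = pt u ∨ i = pt v → (Q (update f i b) ↔ Q f)) :
    #(((piFinset P).filter Q).filter (Picks pt s(u, v))) * (#(P (pt u)) * #(P (pt v)))
      = #((piFinset P).filter Q) := by
  rw [card_filter_piFinset_eq_card_mul (fun f b => hQ f _ b (.inl rfl)) hu,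
    card_filter_piFinset_eq_card_mul (Q := fun f => Q f ∧ f (pt u) = u)
      (fun f b => by rw [update_of_ne hne, hQ f _ b (.inr rfl)]) hv, filter_filter]
  simp only [picks_mk_iff, and_assoc]
  ring

lemma one_le_mul_inv_mul_one_sub_inv_pow {k t : ℕ} {N : ℝ} (hk : k < t)
    (ht : Real.exp 1 * t ≤ N) :
    1 ≤ N * ((t : ℝ)⁻¹ * (1 - (t : ℝ)⁻¹) ^ k) := by
  have ht₀ : (0 : ℝ) < t := by exact_mod_cast hk.trans_le' (Nat.zero_le _)
  have hN : 0 ≤ N := le_trans (by positivity) ht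
  calc (1 : ℝ) = Real.exp 1 * t * ((t : ℝ)⁻¹ * Real.exp (-1)) := by
        rw [Real.exp_neg]; field_simp
    _ ≤ N * ((t : ℝ)⁻¹ * (1 - (t : ℝ)⁻¹) ^ k) := by
        gcongr
        exact exp_neg_one_le_one_sub_inv_pow hk

lemma pt_ne_of_adj {G : SimpleGraph V} {P : Fin m → Finset V}
    (hpt : ∀ v i, v ∈ P i ↔ pt v = i)
    (hindep : ∀ i, ∀ v ∈ P i, ∀ w ∈ P i, ¬ G.Adj v w) {u v : V} (huv : G.Adj u v) :
    pt u ≠ pt v := fun h =>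
  hindep _ _ ((hpt u _).2 rfl) _ ((hpt v _).2 h.symm) huv

lemma card_erase_filter_sharePart_add_two_le [Fintype V] [DecidableEq V] {G : SimpleGraph V}
    [DecidableRel G.Adj] {P : Fin m → Finset V} (hpt : ∀ v i, v ∈ P i ↔ pt v = i)
    {n : ℕ} {D : ℝ}
    (hindep : ∀ i, ∀ v ∈ P i, ∀ w ∈ P i, ¬ G.Adj v w)
    (hpairs : ∀ i j, i ≠ j →
      (∑ v ∈ P i, (G.degree v : ℝ)) + (∑ v ∈ P j, (G.degree v : ℝ)) ≤ 2 * n * D)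
    {e : Sym2 V} (he : e ∈ G.edgeFinset) :
    #((G.edgeFinset.erase e).filter (SharePart pt e)) + 2 ≤ ⌊2 * (n : ℝ) * D⌋₊ := by
  induction e using Sym2.inductionOn with | _ u v =>
  have huv : G.Adj u v := G.mem_edgeFinset.1 he
  have hself : s(u, v) ∈ G.edgeFinset.filter (SharePart pt s(u, v)) :=
    mem_filter.2 ⟨he, u, by simp, u, by simp, rfl⟩
  have hlt := card_filter_sharePart_lt G (fun v => (hpt v _).2 rfl) huv
  have hk : #(G.edgeFinset.filter (SharePart pt s(u, v))) - 1 + 2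
      ≤ ∑ w ∈ P (pt u), G.degree w + ∑ w ∈ P (pt v), G.degree w := by
    have := card_pos.2 ⟨_, hself⟩
    omega
  rw [filter_erase, card_erase_of_mem hself]
  refine Nat.le_floor ((Nat.cast_le.2 hk).trans ?_)
  push_cast
  exact hpairs _ _ (pt_ne_of_adj hpt hindep huv)

lemma card_avoiding_filter_picks_mul [DecidableEq V] {G : SimpleGraph V} {P : Fin m → Finset V}
    (hpt : ∀ v i, v ∈ P i ↔ pt v = i) (hindep : ∀ i, ∀ v ∈ P i, ∀ w ∈ P i, ¬ G.Adj v w)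
    {u v : V} (huv : G.Adj u v) {S : Finset (Sym2 V)} (hS : ∀ e ∈ S, ¬ SharePart pt s(u, v) e) :
    #((avoiding (piFinset P) (Picks pt) S).filter (Picks pt s(u, v)))
        * (#(P (pt u)) * #(P (pt v)))
      = #(avoiding (piFinset P) (Picks pt) S) := by
  unfold avoiding
  convert card_filter_picks_mul (Q := fun f => ∀ e ∈ S, ¬ Picks pt e f)
    (pt_ne_of_adj hpt hindep huv) ((hpt u _).2 rfl) ((hpt v _).2 rfl)
    fun f i b hi => forall₂_congr fun e he => not_congr <|
      picks_update_iff (fun w hw hwi => hS e he <| by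
        rcases hi with rfl | rfl
        exacts [⟨u, by simp, w, hw, hwi.symm⟩, ⟨v, by simp, w, hw, hwi.symm⟩]) f b

lemma exp_one_mul_floor_le_mul_self {n : ℕ} {D : ℝ} (hn : 2 * Real.exp 1 * D ≤ n)
    (ht : 0 < ⌊2 * (n : ℝ) * D⌋₊) :
    Real.exp 1 * ⌊2 * (n : ℝ) * D⌋₊ ≤ n * n := by
  have h2nD : (⌊2 * (n : ℝ) * D⌋₊ : ℝ) ≤ 2 * n * D :=
    Nat.floor_le (by linarith [Nat.floor_pos.1 ht])
  nlinarith [mul_le_mul_of_nonneg_left h2nD (Real.exp_pos 1).le,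
    mul_le_mul_of_nonneg_right hn (Nat.cast_nonneg n)]

lemma card_avoiding_filter_picks_le [DecidableEq V] {G : SimpleGraph V} {P : Fin m → Finset V}
    (hpt : ∀ v i, v ∈ P i ↔ pt v = i) {n : ℕ} (hsize : ∀ i, #(P i) = n)
    (hindep : ∀ i, ∀ v ∈ P i, ∀ w ∈ P i, ¬ G.Adj v w) {e : Sym2 V} (he : e ∈ G.edgeSet)
    {S : Finset (Sym2 V)} (hS : ∀ e' ∈ S, ¬ SharePart pt e e') {k t : ℕ} (hk : k < t)
    (ht : Real.exp 1 * t ≤ n * n) :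
    (#((avoiding (piFinset P) (Picks pt) S).filter (Picks pt e)) : ℝ)
      ≤ (t : ℝ)⁻¹ * (1 - (t : ℝ)⁻¹) ^ k * #(avoiding (piFinset P) (Picks pt) S) := by
  induction e using Sym2.inductionOn with | _ u v =>
  have hmul := card_avoiding_filter_picks_mul hpt hindep he hS
  rw [hsize, hsize] at hmul
  calc (#((avoiding (piFinset P) (Picks pt) S).filter (Picks pt s(u, v))) : ℝ)
      ≤ #((avoiding (piFinset P) (Picks pt) S).filter (Picks pt s(u, v)))
        * (n * n * ((t : ℝ)⁻¹ * (1 - (t : ℝ)⁻¹) ^ k)) :=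
        le_mul_of_one_le_right (Nat.cast_nonneg _) (one_le_mul_inv_mul_one_sub_inv_pow hk ht)
    _ = _ := by rw [← Nat.cast_inj (R := ℝ).2 hmul]; push_cast; ring

theorem exists_independent_transversal [Fintype V] [DecidableEq V] (G : SimpleGraph V)
    [DecidableRel G.Adj] (P : Fin m → Finset V) (hpt : ∀ v i, v ∈ P i ↔ pt v = i)
    {n : ℕ} {D : ℝ} (hn₀ : 0 < n) (hsize : ∀ i, #(P i) = n) (hn : 2 * Real.exp 1 * D ≤ n)
    (hindep : ∀ i, ∀ v ∈ P i, ∀ w ∈ P i, ¬ G.Adj v w)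
    (hpairs : ∀ i j, i ≠ j →
      (∑ v ∈ P i, (G.degree v : ℝ)) + (∑ v ∈ P j, (G.degree v : ℝ)) ≤ 2 * n * D) :
    ∃ f : Fin m → V, (∀ i, f i ∈ P i) ∧ ∀ i j, ¬ G.Adj (f i) (f j) := by
  set t := ⌊2 * (n : ℝ) * D⌋₊
  have hdeg {e} (he : e ∈ G.edgeFinset) :=
    card_erase_filter_sharePart_add_two_le hpt hindep hpairs he
  -- If `G` has no edges, `t` may be `0`; then `x = t⁻¹ = 0` is still admissible.
  have hLLL := one_sub_pow_mul_card_le_card_avoiding (s := piFinset P) (A := Picks pt)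
    (x := (t : ℝ)⁻¹) (by positivity) (Nat.cast_inv_le_one t) (SharePart pt)
    fun e he _ _ _ hS => card_avoiding_filter_picks_le hpt hsize hindep
      (G.mem_edgeFinset.1 he) hS (by have := hdeg he; omega)
      (exp_one_mul_floor_le_mul_self hn (by have := hdeg he; omega))
  have hpow : 0 < (1 - (t : ℝ)⁻¹) ^ #G.edgeFinset := by
    rcases G.edgeFinset.eq_empty_or_nonempty with hE | ⟨e, he⟩
    · simp [hE]
    · have : (1 : ℝ) < t := Nat.one_lt_cast.2 (by have := hdeg he; omega)
      exact pow_pos (sub_pos.2 (inv_lt_one_of_one_lt₀ this)) _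
  have hcard : 0 < #(piFinset P) := by
    rw [card_piFinset, prod_congr rfl fun i _ => hsize i]
    simp [hn₀]
  obtain ⟨f, hf⟩ := card_pos.1 <| Nat.cast_pos.1 <|
    (mul_pos hpow (Nat.cast_pos.2 hcard)).trans_le hLLL
  simp only [avoiding, mem_filter, mem_piFinset] at hf
  refine ⟨f, hf.1, fun i j hij => hf.2 _ (G.mem_edgeFinset.2 (G.mem_edgeSet.2 hij)) ?_⟩
  rw [picks_mk_iff, (hpt _ _).1 (hf.1 i), (hpt _ _).1 (hf.1 j)]
  exact ⟨rfl, rfl⟩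

end Transversal

open Classical in
theorem stmt17_general {V : Type*} [Fintype V] [DecidableEq V]
    (G : SimpleGraph V) [DecidableRel G.Adj]
    (m n : ℕ) (P : Fin m → Finset V) (D : ℝ)
    (hpart : ∀ v : V, ∃! i, v ∈ P i)
    (hn0 : 0 < n)
    (hsize : ∀ i, (P i).card = n)
    (hn : 2 * Real.exp 1 * D ≤ n)
    (hindep : ∀ i, ∀ v ∈ P i, ∀ w ∈ P i, ¬ G.Adj v w)
    (hpairs : ∀ i j, i ≠ j →
      (∑ v ∈ P i, (G.degree v : ℝ)) + (∑ v ∈ P j, (G.degree v : ℝ)) ≤ 2 * n * D) :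
    (((Finset.univ.filter (fun f : Fin m → V => ∀ i, f i ∈ P i)).filter
        (fun f => ∃ i j, G.Adj (f i) (f j))).card : ℝ)
      < ((Finset.univ.filter (fun f : Fin m → V => ∀ i, f i ∈ P i)).card : ℝ) ∧
    ∃ f : Fin m → V, (∀ i, f i ∈ P i) ∧ ∀ i j, ¬ G.Adj (f i) (f j) := by
  choose pt hpt huniq using hpart
  obtain ⟨f, hf, hind⟩ := exists_independent_transversal G P
    (fun v i => ⟨fun h => (huniq v i h).symm, fun h => h ▸ hpt v⟩) hn0 hsize hn hindep hpairs
  refine ⟨?_, f, hf, hind⟩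
  exact_mod_cast card_lt_card <| filter_ssubset.2 ⟨f, by simpa using hf, by simpa using hind⟩

open Classical in
/-- Lovász-Local-Lemma step: if all parts are independent sets of size exactly
`n ≥ 2eD` and `|V_i|·d̄(V_i) + |V_j|·d̄(V_j) ≤ 2nD` for all `i ≠ j`, then choosing one
vertex uniformly and independently from each part, the probability that the chosen set
contains an edge is less than `1`; hence an independent transversal exists. -/
theorem stmt17 {V : Type*} [Fintype V] [DecidableEq V]
    (G : SimpleGraph V) [DecidableRel G.Adj]
    (m n : ℕ) (P : Fin m → Finset V) (D : ℝ)
    (hpart : ∀ v : V, ∃! i, v ∈ P i)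
    (hn0 : 0 < n) (hD : 0 ≤ D)
    (hsize : ∀ i, (P i).card = n)
    (hn : 2 * Real.exp 1 * D ≤ n)
    (hindep : ∀ i, ∀ v ∈ P i, ∀ w ∈ P i, ¬ G.Adj v w)
    (hpairs : ∀ i j, i ≠ j →
      (∑ v ∈ P i, (G.degree v : ℝ)) + (∑ v ∈ P j, (G.degree v : ℝ)) ≤ 2 * n * D) :
    (((Finset.univ.filter (fun f : Fin m → V => ∀ i, f i ∈ P i)).filter
        (fun f => ∃ i j, G.Adj (f i) (f j))).card : ℝ)
      < ((Finset.univ.filter (fun f : Fin m → V => ∀ i, f i ∈ P i)).card : ℝ) ∧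
    ∃ f : Fin m → V, (∀ i, f i ∈ P i) ∧ ∀ i j, ¬ G.Adj (f i) (f j) :=
  stmt17_general G m n P D hpart hn0 hsize hn hindep hpairs
end
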